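/- arXiv:2309.11806 — 7 statements merged into one kernel-verified Lean document; each statement's English description precedes it below -/
import Mathlib

section
/- Order ℕⁿ by the lexicographic order ⪯. Let R be a ring with an ideal 𝔪 such that ⋂_{i≥0} 𝔪^i = 0, R is complete with respect to the 𝔪-adic topology, and the quotient R/𝔪^i is finite for every i ≥ 0. Let T ⊆ ℕⁿ be an infinite set whose least upper bound with respect to ⪯ is an element α ∈ ℕⁿ with α ∉ T, and let (r_β)_{β∈T} be a family of elements of R. Then there exists an infinite subset T' ⊆ T whose least upper bound is also α, such that the subfamily (r_β)_{β∈T'} converges in R; that is, there exists r ∈ R such that for every N > 0 there is a finite subset S ⊆ T' with r − r_β ∈ 𝔪^N for all β ∈ T' ∖ S. -/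
/-- Powers `𝔪^N` of a (left) ideal `𝔪` in a possibly noncommutative ring:
`𝔪^0 = R` and `𝔪^(N+1)` is the ideal generated by products `a * b` with
`a ∈ 𝔪`, `b ∈ 𝔪^N`. -/
def idealPow {R : Type*} [Ring R] (m : Ideal R) : ℕ → Ideal R
  | 0 => ⊤
  | N + 1 => Ideal.span {x | ∃ a ∈ m, ∃ b ∈ idealPow m N, x = a * b}

/-- The lexicographic order on `ℕⁿ`: `α ⪯ β` iff `α = β` or the leftmost nonzero entry of
`β - α` is positive, i.e. there is an index `i` with `α j = β j` for all `j < i` and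
`α i < β i`. -/
def lexLE {n : ℕ} (α β : Fin n → ℕ) : Prop :=
  α = β ∨ ∃ i : Fin n, (∀ j : Fin n, j < i → α j = β j) ∧ α i < β i

/-! In the lexicographic order, a linear order, `α` is approached by `T` but not attained.
Colour `β ∈ T` by the class of `r β` in the finite quotient `R ⧸ 𝔪^N`: some colour class still has
least upper bound `α`, since otherwise the largest of finitely many upper bounds below `α` would
bound `T`. Iterating gives nested sets `S N` with least upper bound `α` on which `r` is constant
modulo `𝔪^N`. Enumerating the countable set `T` as `e 0, e 1, …` and choosing `b N ∈ S (N + 1)`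
above `e N` yields a sequence with least upper bound `α` along which `r` is `𝔪`-adically Cauchy;
its limit is the required `l`. -/

open Set

theorem lexLE_iff_toLex_le {n : ℕ} {a b : Fin n → ℕ} : lexLE a b ↔ toLex a ≤ toLex b := by
  rw [le_iff_eq_or_lt, toLex_inj]
  rfl

theorem isLUB_preimage_ofLex_iff {n : ℕ} {S : Set (Fin n → ℕ)} {α : Fin n → ℕ} :
    IsLUB (ofLex ⁻¹' S) (toLex α) ↔
      (∀ β ∈ S, lexLE β α) ∧ ∀ α' : Fin n → ℕ, (∀ β ∈ S, lexLE β α') → lexLE α α' := by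
  simp only [IsLUB, IsLeast, upperBounds, lowerBounds, mem_ofPred_eq, lexLE_iff_toLex_le]
  exact Iff.rfl

section LinearOrder

variable {X : Type*} [LinearOrder X] {T : Set X} {α : X}

theorem IsLUB.infinite_of_notMem (hT : IsLUB T α) (hαT : α ∉ T) (hne : T.Nonempty) :
    T.Infinite := fun hfin => by
  obtain ⟨m, hm, hmax⟩ := Set.exists_max_image T id hfin hne
  exact hαT (le_antisymm (hT.1 hm) (hT.2 hmax) ▸ hm)

theorem IsLUB.exists_isLUB_inter_preimage {Q : Type*} [Finite Q] (hT : IsLUB T α) (c : X → Q) :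
    ∃ q, IsLUB (T ∩ c ⁻¹' {q}) α := by
  by_contra! hnot
  have hbound (q : Q) : ∃ b < α, ∀ x ∈ T, c x = q → x ≤ b := by
    have hup : α ∈ upperBounds (T ∩ c ⁻¹' {q}) := fun x hx => hT.1 hx.1
    obtain ⟨b, hb, hαb⟩ : ∃ b ∈ upperBounds (T ∩ c ⁻¹' {q}), ¬ α ≤ b := by
      simpa [IsLUB, IsLeast, hup, lowerBounds] using hnot q
    exact ⟨b, not_le.1 hαb, fun x hx hcx => hb ⟨hx, hcx⟩⟩
  choose b hbα hb using hbound
  have : Nonempty Q := ⟨c α⟩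
  obtain ⟨q, hq⟩ := Finite.exists_max b
  obtain ⟨x, hxT, hbx, -⟩ := hT.exists_between (hbα q)
  exact (hbx.trans_le ((hb (c x) x hxT rfl).trans (hq (c x)))).false

theorem IsLUB.exists_antitone_isLUB_forall_eq {Q : ℕ → Type*} [∀ N, Finite (Q N)]
    (hT : IsLUB T α) (c : ∀ N, X → Q N) :
    ∃ S : ℕ → Set X, S 0 = T ∧ Antitone S ∧ (∀ N, IsLUB (S N) α) ∧
      ∀ N, ∀ x ∈ S (N + 1), ∀ y ∈ S (N + 1), c N x = c N y := by
  have step (N : ℕ) (S : Set X) (hS : IsLUB S α) :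
      ∃ S' ⊆ S, IsLUB S' α ∧ ∀ x ∈ S', ∀ y ∈ S', c N x = c N y := by
    obtain ⟨q, hq⟩ := hS.exists_isLUB_inter_preimage (c N)
    exact ⟨S ∩ c N ⁻¹' {q}, inter_subset_left, hq, fun x hx y hy => hx.2.trans hy.2.symm⟩
  choose! next hnext_sub hnext_lub hnext_eq using step
  let S : ℕ → Set X := fun N => Nat.rec T (fun N S => next N S) N
  have hS_lub (N : ℕ) : IsLUB (S N) α := by
    induction N with
    | zero => exact hT
    | succ N ih => exact hnext_lub N _ ih
  exact ⟨S, rfl, antitone_nat_of_succ_le fun N => hnext_sub N _ (hS_lub N), hS_lub,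
    fun N => hnext_eq N _ (hS_lub N)⟩

theorem IsLUB.exists_seq_mem_isLUB_range (hT : IsLUB T α) (hαT : α ∉ T) (hTc : T.Countable)
    (hne : T.Nonempty) {S : ℕ → Set X} (hST : ∀ N, S N ⊆ T) (hS : ∀ N, IsLUB (S N) α) :
    ∃ b : ℕ → X, (∀ N, b N ∈ S N) ∧ IsLUB (range b) α := by
  obtain ⟨e, rfl⟩ := hTc.exists_eq_range hne
  have hlt (N : ℕ) : e N < α :=
    (hT.1 (mem_range_self N)).lt_of_ne fun h => hαT (h ▸ mem_range_self N)
  have hpick (N : ℕ) : ∃ x ∈ S N, e N < x :=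
    let ⟨x, hx, hex, _⟩ := (hS N).exists_between (hlt N)
    ⟨x, hx, hex⟩
  choose b hbS hb using hpick
  refine ⟨b, hbS, fun _ ⟨N, hN⟩ => hN ▸ hT.1 (hST N (hbS N)), fun a ha => hT.2 ?_⟩
  rintro _ ⟨N, rfl⟩
  exact (hb N).le.trans (ha (mem_range_self N))

theorem IsLUB.exists_seq_isLUB_range_forall_ge_eq {Q : ℕ → Type*} [∀ N, Finite (Q N)]
    (hT : IsLUB T α) (hαT : α ∉ T) (hTc : T.Countable) (hne : T.Nonempty) (c : ∀ N, X → Q N) :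
    ∃ b : ℕ → X, (∀ i, b i ∈ T) ∧ IsLUB (range b) α ∧ ∀ N, ∀ i ≥ N, c N (b i) = c N (b N) := by
  obtain ⟨S, rfl, hS_anti, hS_lub, hS_eq⟩ := hT.exists_antitone_isLUB_forall_eq c
  obtain ⟨b, hbS, hb_lub⟩ := hT.exists_seq_mem_isLUB_range hαT hTc hne
    (fun N => hS_anti (Nat.zero_le (N + 1))) (fun N => hS_lub (N + 1))
  refine ⟨b, fun i => hS_anti (Nat.zero_le _) (hbS i), hb_lub, fun N i hi => ?_⟩
  exact hS_eq N _ (hS_anti (Nat.succ_le_succ hi) (hbS i)) _ (hbS N)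

end LinearOrder

theorem statement5_general
    {n : ℕ} {R : Type*} [Ring R] (𝔪 : Ideal R)
    (hcomplete : ∀ f : ℕ → R,
      (∀ N : ℕ, ∃ M : ℕ, ∀ i ≥ M, ∀ j ≥ M, f i - f j ∈ idealPow 𝔪 N) →
      ∃ l : R, ∀ N : ℕ, ∃ M : ℕ, ∀ i ≥ M, l - f i ∈ idealPow 𝔪 N)
    (hfin : ∀ i : ℕ, Finite (R ⧸ idealPow 𝔪 i))
    (T : Set (Fin n → ℕ)) (hTinf : T.Infinite)
    (α : Fin n → ℕ)
    (hub : ∀ β ∈ T, lexLE β α)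
    (hlub : ∀ α' : Fin n → ℕ, (∀ β ∈ T, lexLE β α') → lexLE α α')
    (hαT : α ∉ T)
    (r : (Fin n → ℕ) → R) :
    ∃ T' : Set (Fin n → ℕ), T' ⊆ T ∧ T'.Infinite ∧
      (∀ β ∈ T', lexLE β α) ∧
      (∀ α' : Fin n → ℕ, (∀ β ∈ T', lexLE β α') → lexLE α α') ∧
      ∃ l : R, ∀ N : ℕ, 0 < N →
        ∃ S : Set (Fin n → ℕ), S.Finite ∧ S ⊆ T' ∧
          ∀ β ∈ T' \ S, l - r β ∈ idealPow 𝔪 N := by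
  have hT : IsLUB (ofLex ⁻¹' T) (toLex α) := isLUB_preimage_ofLex_iff.2 ⟨hub, hlub⟩
  obtain ⟨x, hx⟩ := hTinf.nonempty
  obtain ⟨b, hbT, hb_lub, hb_eq⟩ := hT.exists_seq_isLUB_range_forall_ge_eq hαT
    (T.to_countable.preimage ofLex.injective) ⟨toLex x, hx⟩
    fun N β => Submodule.Quotient.mk (p := idealPow 𝔪 N) (r (ofLex β))
  have hcauchy (N : ℕ) :
      ∃ M, ∀ i ≥ M, ∀ j ≥ M, r (ofLex (b i)) - r (ofLex (b j)) ∈ idealPow 𝔪 N := by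
    refine ⟨N, fun i hi j hj => ?_⟩
    rw [← sub_sub_sub_cancel_right _ _ (r (ofLex (b N)))]
    exact sub_mem ((Submodule.Quotient.eq _).1 (hb_eq N i hi))
      ((Submodule.Quotient.eq _).1 (hb_eq N j hj))
  obtain ⟨l, hl⟩ := hcomplete _ hcauchy
  have hT'_lub : IsLUB (ofLex ⁻¹' (ofLex '' range b)) (toLex α) := by
    rwa [Equiv.preimage_image]
  obtain ⟨hT'_ub, hT'_least⟩ := isLUB_preimage_ofLex_iff.1 hT'_lub
  refine ⟨ofLex '' range b, ?_, ?_, hT'_ub, hT'_least, l, fun N _ => ?_⟩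
  · rintro _ ⟨_, ⟨i, rfl⟩, rfl⟩
    exact hbT i
  · exact (hb_lub.infinite_of_notMem (fun ⟨i, hi⟩ => hαT (by simpa [hi] using hbT i))
      (range_nonempty b)).image ofLex.injective.injOn
  obtain ⟨M, hM⟩ := hl N
  refine ⟨ofLex '' (b '' Iio M), ((finite_Iio M).image b).image _,
    image_mono (image_subset_range _ _), ?_⟩
  rintro _ ⟨⟨_, ⟨i, rfl⟩, rfl⟩, hiS⟩
  exact hM i (not_lt.1 fun hi => hiS ⟨b i, ⟨i, hi, rfl⟩, rfl⟩)

/-- Order `ℕⁿ` lexicographically.  Let `R` be a ring with an ideal `𝔪` such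
that `⋂ 𝔪^i = 0`, `R` is complete with respect to the `𝔪`-adic topology (every Cauchy
sequence converges), and `R/𝔪^i` is finite for every `i`.  Let `T ⊆ ℕⁿ` be an infinite set
whose least upper bound is an element `α ∈ ℕⁿ` with `α ∉ T`, and let `(r_β)_{β ∈ T}` be a
family of elements of `R`.  Then there is an infinite subset `T' ⊆ T` whose least upper bound
is also `α`, such that the subfamily `(r_β)_{β ∈ T'}` converges in `R`: there is `l ∈ R`
such that for every `N > 0` there is a finite `S ⊆ T'` with `l - r_β ∈ 𝔪^N` for all
`β ∈ T' \ S`. -/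
theorem statement5
    {n : ℕ} {R : Type*} [Ring R] (𝔪 : Ideal R)
    (hint : ∀ a : R, (∀ i : ℕ, a ∈ idealPow 𝔪 i) → a = 0)
    (hcomplete : ∀ f : ℕ → R,
      (∀ N : ℕ, ∃ M : ℕ, ∀ i ≥ M, ∀ j ≥ M, f i - f j ∈ idealPow 𝔪 N) →
      ∃ l : R, ∀ N : ℕ, ∃ M : ℕ, ∀ i ≥ M, l - f i ∈ idealPow 𝔪 N)
    (hfin : ∀ i : ℕ, Finite (R ⧸ idealPow 𝔪 i))
    (T : Set (Fin n → ℕ)) (hTinf : T.Infinite)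
    (α : Fin n → ℕ)
    (hub : ∀ β ∈ T, lexLE β α)
    (hlub : ∀ α' : Fin n → ℕ, (∀ β ∈ T, lexLE β α') → lexLE α α')
    (hαT : α ∉ T)
    (r : (Fin n → ℕ) → R) :
    ∃ T' : Set (Fin n → ℕ), T' ⊆ T ∧ T'.Infinite ∧
      (∀ β ∈ T', lexLE β α) ∧
      (∀ α' : Fin n → ℕ, (∀ β ∈ T', lexLE β α') → lexLE α α') ∧
      ∃ l : R, ∀ N : ℕ, 0 < N →
        ∃ S : Set (Fin n → ℕ), S.Finite ∧ S ⊆ T' ∧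
          ∀ β ∈ T' \ S, l - r β ∈ idealPow 𝔪 N :=
  statement5_general 𝔪 hcomplete hfin T hTinf α hub hlub hαT r
end

section
/- Let p be a prime and let a, r ∈ ℕ with a ≥ p^r. Then the p-adic valuation satisfies v_p(a!/(a−p^r)!) ≥ p^{r−1} + p^{r−2} + ⋯ + p + 1 (this sum being (p^r − 1)/(p − 1), interpreted as 0 when r = 0), with equality if and only if no integer in the interval {a − p^r + 1, a − p^r + 2, …, a} is divisible by p^{r+1} (equivalently, the unique multiple of p^r in this interval has p-adic valuation exactly r). -/
/-- Let `p` be a prime and `a, r ∈ ℕ` with `a ≥ p^r`.  Then the `p`-adic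
valuation of `a!/(a - p^r)!` is at least `p^(r-1) + ⋯ + p + 1 = Σ_{i<r} p^i`, with equality
if and only if no integer in the interval `{a - p^r + 1, …, a}` is divisible by `p^(r+1)`. -/
theorem statement6
    (p : ℕ) (hp : p.Prime) (a r : ℕ) (h : p ^ r ≤ a) :
    (∑ i ∈ Finset.range r, p ^ i) ≤
        padicValNat p (Nat.factorial a / Nat.factorial (a - p ^ r)) ∧
      (padicValNat p (Nat.factorial a / Nat.factorial (a - p ^ r)) =
          ∑ i ∈ Finset.range r, p ^ i ↔
        ∀ m : ℕ, a - p ^ r + 1 ≤ m → m ≤ a → ¬ p ^ (r + 1) ∣ m) := by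
  haveI : Fact p.Prime := ⟨hp⟩
  have hppos : 0 < p := hp.pos
  have hq0 : 0 < p ^ r := pow_pos hppos r
  set b := Nat.log p a + r + 2 with hb
  have hla : Nat.log p a < b := by omega
  have hlb : Nat.log p (a - p ^ r) < b :=
    lt_of_le_of_lt (Nat.log_mono_right (Nat.sub_le a _)) hla
  have hdvd : Nat.factorial (a - p ^ r) ∣ Nat.factorial a :=
    Nat.factorial_dvd_factorial (Nat.sub_le a _)
  have key : padicValNat p (Nat.factorial a / Nat.factorial (a - p ^ r)) =
      ∑ i ∈ Finset.Ico 1 b, (a / p ^ i - (a - p ^ r) / p ^ i) := by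
    rw [padicValNat.div_of_dvd hdvd, padicValNat_factorial hla, padicValNat_factorial hlb,
      Finset.sum_tsub_distrib _ fun i _ => Nat.div_le_div_right (Nat.sub_le a _)]
  have hsplit : padicValNat p (Nat.factorial a / Nat.factorial (a - p ^ r)) =
      (∑ i ∈ Finset.range r, p ^ i) +
        ∑ i ∈ Finset.Ico (r + 1) b, (a / p ^ i - (a - p ^ r) / p ^ i) := by
    rw [key, ← Finset.sum_Ico_consecutive _ (by omega : 1 ≤ r + 1) (by omega : r + 1 ≤ b)]
    congr 1
    have hfirst : ∀ i ∈ Finset.Ico 1 (r + 1),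
        a / p ^ i - (a - p ^ r) / p ^ i = p ^ (r - i) := by
      intro i hi
      simp only [Finset.mem_Ico] at hi
      have hir : i ≤ r := by omega
      have ha' : a = (a - p ^ r) + p ^ (r - i) * p ^ i := by
        rw [← pow_add, Nat.sub_add_cancel hir]
        omega
      have hdiv : a / p ^ i = (a - p ^ r) / p ^ i + p ^ (r - i) := by
        conv_lhs => rw [ha']
        rw [Nat.add_mul_div_right _ _ (pow_pos hppos i)]
      omega
    rw [Finset.sum_congr rfl hfirst, Finset.sum_Ico_eq_sum_range]
    simp only [add_tsub_cancel_right]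
    have : ∀ j ∈ Finset.range r, p ^ (r - (1 + j)) = p ^ (r - 1 - j) := by
      intro j hj; congr 1; omega
    rw [Finset.sum_congr rfl this, Finset.sum_range_reflect]
  constructor
  · rw [hsplit]; exact Nat.le_add_right _ _
  · rw [hsplit]
    have hiff : (∑ i ∈ Finset.range r, p ^ i) +
        (∑ i ∈ Finset.Ico (r + 1) b, (a / p ^ i - (a - p ^ r) / p ^ i)) =
        (∑ i ∈ Finset.range r, p ^ i) ↔
        (∑ i ∈ Finset.Ico (r + 1) b, (a / p ^ i - (a - p ^ r) / p ^ i)) = 0 := by omega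
    rw [hiff]
    constructor
    · intro hzero m hm1 hm2 hmdvd
      have hterm : a / p ^ (r + 1) - (a - p ^ r) / p ^ (r + 1) = 0 := by
        rw [Finset.sum_eq_zero_iff] at hzero
        exact hzero _ (by simp [Finset.mem_Ico]; omega)
      have h1 : m / p ^ (r + 1) ≤ a / p ^ (r + 1) := Nat.div_le_div_right hm2
      have h2 : (a - p ^ r) / p ^ (r + 1) < m / p ^ (r + 1) :=
        Nat.div_lt_div_of_lt_of_dvd hmdvd (by omega)
      omega
    · intro hC
      apply Finset.sum_eq_zero
      intro i hi
      simp only [Finset.mem_Ico] at hi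
      by_contra hne
      have hlt : (a - p ^ r) / p ^ i < a / p ^ i := by omega
      set m := (a / p ^ i) * p ^ i with hm
      have hma : m ≤ a := Nat.div_mul_le_self a _
      have hmgt : a - p ^ r < m := by
        have := (Nat.div_lt_iff_lt_mul (pow_pos hppos i)).mp hlt
        exact this
      have hmdvd : p ^ (r + 1) ∣ m :=
        dvd_trans (pow_dvd_pow p hi.1) (dvd_mul_left _ _)
      exact hC m (by omega) hma hmdvd
end

section
/- For every α ∈ ℕⁿ, E(D(α)) ⊆ D(E(α)); that is, if β ∈ D(α) and γ ∈ E(β), then there exists δ ∈ E(α) with γ ∈ D(δ). -/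
/-- The set of elementary shuffles `σ_{ij} = e_i - e_j ∈ ℤⁿ`, for `i ≤ j`. -/
def elementaryShuffles (n : ℕ) : Set (Fin n → ℤ) :=
  {v | ∃ i j : Fin n, i ≤ j ∧ v = Pi.single i (1 : ℤ) - Pi.single j (1 : ℤ)}

/-- The set `S_n ⊆ ℤⁿ` of shuffles: finite sums of elementary shuffles (including `0`). -/
def shuffles (n : ℕ) : Set (Fin n → ℤ) :=
  (AddSubmonoid.closure (elementaryShuffles n) : AddSubmonoid (Fin n → ℤ))

/-- The inclusion `ℕⁿ ⊆ ℤⁿ`. -/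
def natToInt {n : ℕ} (α : Fin n → ℕ) : Fin n → ℤ := fun i => (α i : ℤ)

/-- `D(α) = α + ℕⁿ`. -/
def Dpt {n : ℕ} (α : Fin n → ℕ) : Set (Fin n → ℕ) := {β | ∃ γ : Fin n → ℕ, β = α + γ}

/-- `E(α) = (α + S_n) ∩ ℕⁿ`. -/
def Ept {n : ℕ} (α : Fin n → ℕ) : Set (Fin n → ℕ) :=
  {β | ∃ s ∈ shuffles n, natToInt β = natToInt α + s}

/-- `D(X) = ⋃_{α ∈ X} D(α)`. -/
def Dst {n : ℕ} (X : Set (Fin n → ℕ)) : Set (Fin n → ℕ) := ⋃ α ∈ X, Dpt α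

/-- `E(X) = ⋃_{α ∈ X} E(α)`. -/
def Est {n : ℕ} (X : Set (Fin n → ℕ)) : Set (Fin n → ℕ) := ⋃ α ∈ X, Ept α

/-- `F(α) = D(E(α))`. -/
def Fpt {n : ℕ} (α : Fin n → ℕ) : Set (Fin n → ℕ) := Dst (Ept α)

/-!
A vector `v ∈ ℤⁿ` is a shuffle iff its prefix sums `Pₘ(v) = v₀ + ⋯ + vₘ₋₁` are all nonnegative
and `Pₙ(v) = 0`. Hence if `γ ∈ E(D(α))` then `Pₘ(γ) ≥ Pₘ(α)` for every `m`. Now take the entries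
of `γ` greedily from the left until the total `|α|` is collected: the resulting `δ ≤ γ` has
prefix sums `min (Pₘ(γ)) |α| ≥ Pₘ(α)` and total `|α|`, so `δ - α` is a shuffle.
-/

open Finset

section PrefixSum

variable {n : ℕ} {M : Type*} [AddCommMonoid M]

def prefixSum (m : ℕ) : (Fin n → M) →+ M where
  toFun v := ∑ i : Fin n with i.val < m, v i
  map_zero' := by simp
  map_add' _ _ := sum_add_distrib

lemma prefixSum_apply (m : ℕ) (v : Fin n → M) :
    prefixSum m v = ∑ i : Fin n with i.val < m, v i := rfl

@[simp]
lemma prefixSum_zero (v : Fin n → M) : prefixSum 0 v = 0 := by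
  simp [prefixSum_apply]

lemma prefixSum_of_le {m : ℕ} (hm : n ≤ m) (v : Fin n → M) : prefixSum m v = ∑ i, v i := by
  rw [prefixSum_apply, filter_true_of_mem fun i _ => by omega]

lemma prefixSum_succ_of_le {m : ℕ} (hm : n ≤ m) (v : Fin n → M) :
    prefixSum (m + 1) v = prefixSum m v := by
  rw [prefixSum_of_le hm, prefixSum_of_le (by omega)]

lemma prefixSum_succ_of_lt {m : ℕ} (hm : m < n) (v : Fin n → M) :
    prefixSum (m + 1) v = prefixSum m v + v ⟨m, hm⟩ := by
  have : univ.filter (fun i : Fin n => i.val < m + 1) =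
      insert ⟨m, hm⟩ (univ.filter (·.val < m)) := by
    ext i; simp [Fin.ext_iff]; omega
  rw [prefixSum_apply, this, sum_insert (by simp), add_comm, prefixSum_apply]

lemma prefixSum_single (i : Fin n) (c : M) (m : ℕ) :
    prefixSum m (Pi.single i c) = if (i : ℕ) < m then c else 0 := by
  simp [prefixSum_apply, sum_pi_single']

lemma prefixSum_le_sum [PartialOrder M] [CanonicallyOrderedAdd M] (v : Fin n → M) (m : ℕ) :
    prefixSum m v ≤ ∑ i, v i := by
  rw [prefixSum_apply]
  exact sum_le_sum_of_subset (filter_subset _ _)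

lemma prefixSum_natToInt (v : Fin n → ℕ) (m : ℕ) :
    prefixSum m (natToInt v) = prefixSum m v := by
  simp [prefixSum_apply, natToInt]

end PrefixSum

section Shuffles

variable {n : ℕ}

lemma mem_shuffles_of_prefixSum_nonneg {v : Fin n → ℤ} (hpos : ∀ m, 0 ≤ prefixSum m v)
    (htot : prefixSum n v = 0) : v ∈ shuffles n := by
  -- summation by parts: `v = ∑ₖ Pₖ₊₁ (eₖ - eₖ₊₁)` because `P₀ = Pₙ = 0`
  let e (k : ℕ) : Fin n → ℤ := fun i => if (i : ℕ) = k then 1 else 0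
  have hsum : v = ∑ k ∈ range n, prefixSum (k + 1) v • (e k - e (k + 1)) := by
    ext i
    have hshift := sum_range_succ' (fun k => if (i : ℕ) = k then prefixSum k v else 0) n
    simp only [sum_ite_eq, mem_range, prefixSum_zero, ite_self, add_zero,
      show (i : ℕ) < n + 1 by omega, if_true] at hshift
    simp [Finset.sum_apply, e, smul_sub, sum_sub_distrib, ← hshift, prefixSum_succ_of_lt i.2]
  rw [hsum]
  refine sum_mem fun k hk => ?_
  rcases lt_or_ge (k + 1) n with h | h
  · have : e k - e (k + 1) ∈ elementaryShuffles n := by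
      refine ⟨⟨k, by omega⟩, ⟨k + 1, h⟩, by simp [Fin.le_def], ?_⟩
      ext i
      simp [e, Pi.single_apply, Fin.ext_iff]
    obtain ⟨c, hc⟩ := Int.eq_ofNat_of_zero_le (hpos (k + 1))
    rw [hc, natCast_zsmul]
    exact nsmul_mem (AddSubmonoid.subset_closure this) _
  · rw [show k + 1 = n by simp at hk; omega, htot, zero_smul]
    exact zero_mem _

theorem mem_shuffles_iff {v : Fin n → ℤ} :
    v ∈ shuffles n ↔ (∀ m, 0 ≤ prefixSum m v) ∧ prefixSum n v = 0 := by
  refine ⟨fun hv => ?_, fun h => mem_shuffles_of_prefixSum_nonneg h.1 h.2⟩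
  induction hv using AddSubmonoid.closure_induction with
  | mem _ h =>
    obtain ⟨i, j, hij, rfl⟩ := h
    have hij : (i : ℕ) ≤ j := hij
    simp only [map_sub, prefixSum_single]
    exact ⟨fun m => by split_ifs <;> omega, by simp [i.2, j.2]⟩
  | zero => simp
  | add _ _ _ _ hv hw =>
    exact ⟨fun m => by simpa using add_nonneg (hv.1 m) (hw.1 m), by simp [hv.2, hw.2]⟩

lemma prefixSum_le_of_mem_Est_Dpt {α γ : Fin n → ℕ} (h : γ ∈ Est (Dpt α)) (m : ℕ) :
    prefixSum m α ≤ prefixSum m γ := by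
  simp only [Est, Set.mem_iUnion, exists_prop] at h
  obtain ⟨_, ⟨ε, rfl⟩, s, hs, hγ⟩ := h
  have hsm := (mem_shuffles_iff.1 hs).1 m
  have hγm := congrArg (prefixSum m) hγ
  rw [map_add, prefixSum_natToInt, prefixSum_natToInt, map_add] at hγm
  omega

end Shuffles

section Greedy

variable {n : ℕ}

def greedyTruncation (γ : Fin n → ℕ) (T : ℕ) : Fin n → ℕ :=
  fun i => min (γ i) (T - prefixSum i γ)

lemma greedyTruncation_le (γ : Fin n → ℕ) (T : ℕ) : greedyTruncation γ T ≤ γ :=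
  fun _ => min_le_left _ _

lemma prefixSum_greedyTruncation (γ : Fin n → ℕ) (T m : ℕ) :
    prefixSum m (greedyTruncation γ T) = min (prefixSum m γ) T := by
  induction m with
  | zero => simp
  | succ m ih =>
    rcases lt_or_ge m n with hm | hm
    · rw [prefixSum_succ_of_lt hm, prefixSum_succ_of_lt hm, ih]
      simp only [greedyTruncation]
      omega
    · rw [prefixSum_succ_of_le hm, prefixSum_succ_of_le hm, ih]

lemma greedyTruncation_mem_Ept {α γ : Fin n → ℕ} (h : ∀ m, prefixSum m α ≤ prefixSum m γ) :
    greedyTruncation γ (∑ i, α i) ∈ Ept α := by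
  refine ⟨_, mem_shuffles_iff.2 ⟨fun m => ?_, ?_⟩, (add_sub_cancel _ _).symm⟩
  · rw [map_sub, prefixSum_natToInt, prefixSum_natToInt, prefixSum_greedyTruncation, sub_nonneg]
    exact_mod_cast le_min (h m) (prefixSum_le_sum α m)
  · have htot := h n
    rw [prefixSum_of_le le_rfl α] at htot
    rw [map_sub, prefixSum_natToInt, prefixSum_natToInt, prefixSum_greedyTruncation,
      min_eq_right htot, prefixSum_of_le le_rfl, sub_self]

end Greedy

/-- For every `α ∈ ℕⁿ`, `E(D(α)) ⊆ D(E(α))`; that is, if `β ∈ D(α)` and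
`γ ∈ E(β)`, then there exists `δ ∈ E(α)` with `γ ∈ D(δ)`. -/
theorem statement7 {n : ℕ} (α : Fin n → ℕ) : Est (Dpt α) ⊆ Dst (Ept α) := by
  intro γ hγ
  let δ := greedyTruncation γ (∑ i, α i)
  have hδ : δ ∈ Ept α := greedyTruncation_mem_Ept (prefixSum_le_of_mem_Est_Dpt hγ)
  exact Set.mem_biUnion hδ ⟨γ - δ, (add_tsub_cancel_of_le (greedyTruncation_le _ _)).symm⟩
end

section
/- For every α ∈ ℕⁿ, α is the minimum of F(α) with respect to the degree lexicographic order: α ∈ F(α), and every β ∈ F(α) satisfies α ⪯_deglex β. -/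
/-- The degree lexicographic order on `ℕⁿ`: `α ⪯ β` iff `|α| < |β|`, or `α = β`, or
`|α| = |β|` and the leftmost nonzero entry of `β - α ∈ ℤⁿ` is positive. -/
def deglexLE {n : ℕ} (α β : Fin n → ℕ) : Prop :=
  (∑ i, α i) < (∑ i, β i) ∨ α = β ∨
    ((∑ i, α i) = (∑ i, β i) ∧ ∃ i : Fin n, (∀ j : Fin n, j < i → α j = β j) ∧ α i < β i)

/-
Every shuffle `s` has total sum `0` and nonnegative prefix sums `s₁ + ⋯ + s_k`, since each
elementary shuffle `e_i - e_j` with `i ≤ j` does. Hence `E(α)` lies in the slice `|β| = |α|`, and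
for `δ ∈ E(α)` with `δ ≠ α` the first nonzero entry of `δ - α` equals the first nonzero prefix
sum, which is positive: `α ⪯ δ`. Adding an element of `ℕⁿ` to `δ` either changes nothing or
strictly increases the degree.
-/

open Finset

def balancedPrefix (n : ℕ) : AddSubmonoid (Fin n → ℤ) where
  carrier := {s | ∑ i, s i = 0 ∧ ∀ k, 0 ≤ ∑ j ∈ Iic k, s j}
  zero_mem' := by simp
  add_mem' := by
    rintro s t ⟨hs, hs'⟩ ⟨ht, ht'⟩
    refine ⟨by simp [sum_add_distrib, hs, ht], fun k => ?_⟩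
    simpa only [Pi.add_apply, sum_add_distrib] using add_nonneg (hs' k) (ht' k)

lemma elementaryShuffles_subset_balancedPrefix (n : ℕ) :
    elementaryShuffles n ⊆ balancedPrefix n := by
  rintro _ ⟨i, j, hij, rfl⟩
  refine ⟨by simp [sum_sub_distrib], fun k => ?_⟩
  simp only [Pi.sub_apply, sum_sub_distrib, Pi.single_apply, sum_ite_eq', mem_Iic]
  split_ifs <;> omega

lemma shuffles_subset_balancedPrefix (n : ℕ) : shuffles n ⊆ balancedPrefix n :=
  AddSubmonoid.closure_le.mpr (elementaryShuffles_subset_balancedPrefix n)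

lemma exists_first_pos_of_sum_Iic_nonneg {n : ℕ} {s : Fin n → ℤ}
    (hs : ∀ k, 0 ≤ ∑ j ∈ Iic k, s j) (hne : s ≠ 0) :
    ∃ i, (∀ j < i, s j = 0) ∧ 0 < s i := by
  obtain ⟨i₀, hi₀⟩ := Function.ne_iff.mp hne
  obtain ⟨i, hi, hmin⟩ := wellFounded_lt.has_min {i | s i ≠ 0} ⟨i₀, hi₀⟩
  have hbefore : ∀ j < i, s j = 0 := fun j hj => not_not.mp fun h => hmin j h hj
  have hprefix : ∑ j ∈ Iic i, s j = s i :=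
    sum_eq_single_of_mem i (mem_Iic.mpr le_rfl) fun j hj hji =>
      hbefore j (lt_of_le_of_ne (mem_Iic.mp hj) hji)
  exact ⟨i, hbefore, lt_of_le_of_ne (hprefix ▸ hs i) (Ne.symm hi)⟩

lemma natToInt_injective (n : ℕ) : Function.Injective (natToInt (n := n)) :=
  fun _ _ h => funext fun i => Int.ofNat_inj.mp (congrFun h i)

lemma sum_eq_of_mem_Ept {n : ℕ} {α δ : Fin n → ℕ} (hδ : δ ∈ Ept α) :
    ∑ i, δ i = ∑ i, α i := by
  obtain ⟨s, hs, hδs⟩ := hδ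
  have hsum : ∑ i, s i = 0 := (shuffles_subset_balancedPrefix n hs).1
  have hδi : ∀ i, (δ i : ℤ) = α i + s i := fun i => congrFun hδs i
  have : ∑ i, (δ i : ℤ) = ∑ i, (α i : ℤ) := by simp only [hδi, sum_add_distrib, hsum, add_zero]
  exact_mod_cast this

lemma deglexLE_of_mem_Ept {n : ℕ} {α δ : Fin n → ℕ} (hδ : δ ∈ Ept α) : deglexLE α δ := by
  by_cases hαδ : α = δ
  · exact .inr (.inl hαδ)
  obtain ⟨s, hs, hδs⟩ := hδ
  have hδi : ∀ i, (δ i : ℤ) = α i + s i := fun i => congrFun hδs i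
  have hs0 : s ≠ 0 := by
    rintro rfl
    exact hαδ (natToInt_injective n (by simpa using hδs.symm))
  obtain ⟨i, hbefore, hpos⟩ :=
    exists_first_pos_of_sum_Iic_nonneg (shuffles_subset_balancedPrefix n hs).2 hs0
  refine .inr (.inr ⟨(sum_eq_of_mem_Ept ⟨s, hs, hδs⟩).symm, i, fun j hj => ?_, ?_⟩)
  · have := hδi j; have := hbefore j hj; omega
  · have := hδi i; omega

lemma deglexLE.sum_le {n : ℕ} {α β : Fin n → ℕ} (h : deglexLE α β) :
    ∑ i, α i ≤ ∑ i, β i := by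
  rcases h with h | rfl | ⟨h, -⟩
  · exact h.le
  · exact le_rfl
  · exact h.le

lemma deglexLE.add_right {n : ℕ} {α β : Fin n → ℕ} (h : deglexLE α β) (γ : Fin n → ℕ) :
    deglexLE α (β + γ) := by
  rcases (∑ i, γ i).eq_zero_or_pos with hγ | hγ
  · rwa [(Fintype.sum_eq_zero_iff_of_nonneg (fun _ => Nat.zero_le _)).mp hγ, add_zero]
  · left
    have := h.sum_le
    simp only [Pi.add_apply, sum_add_distrib]
    omega

lemma self_mem_Fpt {n : ℕ} (α : Fin n → ℕ) : α ∈ Fpt α :=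
  Set.mem_biUnion (⟨0, AddSubmonoid.zero_mem _, by simp⟩ : α ∈ Ept α) ⟨0, by simp⟩

/-- For every `α ∈ ℕⁿ`, `α` is the minimum of `F(α)` with respect to the
degree lexicographic order: `α ∈ F(α)` and every `β ∈ F(α)` satisfies `α ⪯_deglex β`. -/
theorem statement9 {n : ℕ} (α : Fin n → ℕ) :
    α ∈ Fpt α ∧ ∀ β ∈ Fpt α, deglexLE α β := by
  refine ⟨self_mem_Fpt α, fun β hβ => ?_⟩
  obtain ⟨δ, hδ, γ, rfl⟩ : ∃ δ ∈ Ept α, ∃ γ, β = δ + γ := by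
    simpa [Fpt, Dst, Dpt] using hβ
  exact (deglexLE_of_mem_Ept hδ).add_right γ
end

section
/- For every α ∈ ℕⁿ, α is the minimum of F(α) with respect to the degree reverse lexicographic order: α ∈ F(α), and every β ∈ F(α) satisfies α ⪯_degrevlex β. -/
/-- The degree reverse lexicographic order on `ℕⁿ`: `α ⪯ β` iff `|α| < |β|`, or `α = β`, or
`|α| = |β|` and the rightmost nonzero entry of `β - α ∈ ℤⁿ` is negative. -/
def degrevlexLE {n : ℕ} (α β : Fin n → ℕ) : Prop :=
  (∑ i, α i) < (∑ i, β i) ∨ α = β ∨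
    ((∑ i, α i) = (∑ i, β i) ∧ ∃ i : Fin n, (∀ j : Fin n, i < j → α j = β j) ∧ β i < α i)

lemma shuffle_suffix {n : ℕ} {s : Fin n → ℤ} (hs : s ∈ shuffles n) :
    (∑ j, s j = 0) ∧ ∀ k : Fin n, ∑ j ∈ Finset.univ.filter (fun j => k ≤ j), s j ≤ 0 := by
  refine AddSubmonoid.closure_induction ?_ ?_ ?_ hs
  · rintro v ⟨i, j, hij, rfl⟩
    constructor
    · simp [Pi.sub_apply, Finset.sum_sub_distrib]
    · intro k
      simp only [Pi.sub_apply]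
      rw [Finset.sum_sub_distrib]
      by_cases hki : k ≤ i
      · have hkj : k ≤ j := le_trans hki hij
        rw [Finset.sum_eq_single i, Finset.sum_eq_single j]
        · simp
        · intro b _ hb; exact Pi.single_eq_of_ne hb 1
        · intro h; simp [hkj] at h
        · intro b _ hb; exact Pi.single_eq_of_ne hb 1
        · intro h; simp [hki] at h
      · have h1 : ∑ x ∈ Finset.univ.filter (fun j => k ≤ j), Pi.single i (1:ℤ) x = 0 := by
          refine Finset.sum_eq_zero fun b hb => ?_
          refine Pi.single_eq_of_ne (fun h => hki ?_) 1
          simp at hb; rwa [← h]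
        rw [h1]
        refine sub_nonpos.mpr (Finset.sum_nonneg fun b _ => ?_)
        rcases eq_or_ne b j with rfl | hb
        · simp
        · rw [Pi.single_eq_of_ne hb]
  · exact ⟨by simp, fun k => by simp⟩
  · rintro x y _ _ ⟨hx1, hx2⟩ ⟨hy1, hy2⟩
    refine ⟨?_, fun k => ?_⟩
    · simp only [Pi.add_apply, Finset.sum_add_distrib, hx1, hy1, add_zero]
    · simp only [Pi.add_apply, Finset.sum_add_distrib]
      exact add_nonpos (hx2 k) (hy2 k)

/-- For every `α ∈ ℕⁿ`, `α` is the minimum of `F(α)` with respect to the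
degree reverse lexicographic order: `α ∈ F(α)` and every `β ∈ F(α)` satisfies
`α ⪯_degrevlex β`. -/
theorem statement10 {n : ℕ} (α : Fin n → ℕ) :
    α ∈ Fpt α ∧ ∀ β ∈ Fpt α, degrevlexLE α β := by
  constructor
  · exact Set.mem_iUnion₂.mpr ⟨α,
      ⟨0, (AddSubmonoid.closure (elementaryShuffles n)).zero_mem, by simp⟩, ⟨0, by simp⟩⟩
  · intro β hβ
    obtain ⟨γ, ⟨s, hs, hγ⟩, δ, rfl⟩ := Set.mem_iUnion₂.mp hβ
    obtain ⟨hsum0, hsuf⟩ := shuffle_suffix hs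
    have hγi : ∀ i, (γ i : ℤ) = (α i : ℤ) + s i := fun i => congrFun hγ i
    have hsumγ : ∑ i, γ i = ∑ i, α i := by
      have : ((∑ i, γ i : ℕ) : ℤ) = ((∑ i, α i : ℕ) : ℤ) := by
        push_cast
        simp only [hγi, Finset.sum_add_distrib, hsum0, add_zero]
      exact_mod_cast this
    have hsumβ : ∑ i, (γ + δ) i = ∑ i, α i + ∑ i, δ i := by
      simp [Finset.sum_add_distrib, hsumγ]
    rcases Nat.eq_zero_or_pos (∑ i, δ i) with hδ | hδ
    · -- δ = 0, so β = γ
      have hδ0 : ∀ i, δ i = 0 := fun i =>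
        Finset.sum_eq_zero_iff.mp hδ i (Finset.mem_univ i)
      have hβγ : γ + δ = γ := by funext i; simp [hδ0 i]
      rw [hβγ]
      by_cases hs0 : s = 0
      · right; left
        funext i
        have := hγi i
        rw [hs0] at this
        exact_mod_cast (this.trans (add_zero _)).symm
      · right; right
        refine ⟨hsumγ.symm, ?_⟩
        have hne : (Finset.univ.filter (fun i => s i ≠ 0)).Nonempty := by
          by_contra h
          apply hs0
          funext i
          by_contra hi
          exact h ⟨i, Finset.mem_filter.mpr ⟨Finset.mem_univ i, hi⟩⟩
        set i := (Finset.univ.filter (fun i => s i ≠ 0)).max' hne with hi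
        have hi_mem := (Finset.univ.filter (fun i => s i ≠ 0)).max'_mem hne
        have hsi : s i ≠ 0 := (Finset.mem_filter.mp hi_mem).2
        have hgt : ∀ j, i < j → s j = 0 := by
          intro j hj
          by_contra hjne
          exact absurd (Finset.le_max' _ j (Finset.mem_filter.mpr ⟨Finset.mem_univ j, hjne⟩))
            (not_le.mpr hj)
        have hsuf_i : ∑ j ∈ Finset.univ.filter (fun j => i ≤ j), s j = s i := by
          refine Finset.sum_eq_single_of_mem i (by simp) fun b hb hbne => ?_
          have : i ≤ b := (Finset.mem_filter.mp hb).2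
          exact hgt b (lt_of_le_of_ne this (Ne.symm hbne))
        have hsi_neg : s i < 0 := lt_of_le_of_ne (hsuf_i ▸ hsuf i) hsi
        refine ⟨i, fun j hj => ?_, ?_⟩
        · have := hγi j
          rw [hgt j hj, add_zero] at this
          exact_mod_cast this.symm
        · have : (γ i : ℤ) < (α i : ℤ) := by
            rw [hγi i]; linarith
          exact_mod_cast this
    · left
      rw [hsumβ]
      omega
end

section
/- (Multivariate division for commutative power series over a finite field.) Let k be a finite field, R = k[[x_1, …, x_n]], and let ⪯ be an additive total order on ℕⁿ. Let F = (f_1, …, f_s) be a tuple of nonzero elements of R, and define Δ_{F,r} = (LM(f_r) + ℕⁿ) ∖ ⋃_{i=1}^{r−1} Δ_{F,i} for 1 ≤ r ≤ s and Δ̄_F = ℕⁿ ∖ ⋃_{i=1}^{s} Δ_{F,i}. Then every f ∈ R can be written as f = q_1 f_1 + ⋯ + q_s f_s + r, where the elements q_1, …, q_s, r ∈ R satisfying supp(q_i) + LM(f_i) ⊆ Δ_{F,i} for all 1 ≤ i ≤ s and supp(r) ⊆ Δ̄_F are unique; moreover, for this expression, LM(f) ⪯ LM(q_i f_i) for every i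 with q_i f_i ≠ 0. -/
/-!
A pair `(q, r)` satisfying the support conditions is encoded by the single series
`P = ∑ qᵢ · lt(fᵢ) + r`, where `lt(fᵢ)` is the least term of `fᵢ`: since the sets `Δ_{F,i}`
and `Δ̄_F` partition `ℕⁿ`, the coefficients of `P` on `Δ_{F,i}` are those of `qᵢ` (shifted by
`LM(fᵢ)` and scaled by the leading coefficient) and on `Δ̄_F` those of `r`, so the encoding is
bijective. Writing `fᵢ = lt(fᵢ) + tᵢ`, the equation `g = ∑ qᵢ fᵢ + r` becomes
`P + ∑ qᵢ tᵢ = g`, and the coefficient of `∑ qᵢ tᵢ` at `β` involves only coefficients of `P`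
strictly below `β`, because `supp tᵢ` lies strictly above `LM(fᵢ)`. The order refines the
divisibility order of `ℕⁿ`, a well quasi-order by Dickson's lemma, so it is well-founded and this
triangular system has a unique solution. The same induction shows that every exponent of `supp P`
is above `LM(g)`, which bounds `LM(qᵢ fᵢ)`.
-/

/-- The support of a multivariate power series: the set of exponents with nonzero
coefficient. -/
def psupp {n : ℕ} {k : Type*} [Semiring k] (f : MvPowerSeries (Fin n) k) :
    Set (Fin n →₀ ℕ) :=
  {α | MvPowerSeries.coeff α f ≠ 0}

/-- `IsLM le f μ` says that `μ` is the least monomial `LM(f)` of `f` with respect to the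
order `le`: `μ` lies in the support of `f` and is `le`-smaller than every element of the
support.  (In particular this forces `f ≠ 0`.) -/
def IsLM {n : ℕ} {k : Type*} [Semiring k] (le : (Fin n →₀ ℕ) → (Fin n →₀ ℕ) → Prop)
    (f : MvPowerSeries (Fin n) k) (μ : Fin n →₀ ℕ) : Prop :=
  μ ∈ psupp f ∧ ∀ ν ∈ psupp f, le μ ν

/-- `le` is an additive total order on `ℕⁿ`: a total order such that `0 ⪯ α` for all `α`,
and `α ⪯ β` implies `α + γ ⪯ β + γ`.  (Every such order is a well-order.) -/
structure IsAdditiveTotalOrder {n : ℕ} (le : (Fin n →₀ ℕ) → (Fin n →₀ ℕ) → Prop) : Prop where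
  total : ∀ α β, le α β ∨ le β α
  antisymm : ∀ α β, le α β → le β α → α = β
  trans : ∀ α β γ, le α β → le β γ → le α γ
  zero_le : ∀ α, le 0 α
  add_right : ∀ α β γ, le α β → le (α + γ) (β + γ)

/-- Membership in `Δ_{F,r} = (LM(f_r) + ℕⁿ) ∖ ⋃_{i<r} Δ_{F,i}`, where `μ i = LM(f_i)`.
(Unwinding the recursion, `Δ_{F,r} = (μ r + ℕⁿ) ∖ ⋃_{i<r} (μ i + ℕⁿ)`.) -/
def InDelta {n s : ℕ} (μ : Fin s → (Fin n →₀ ℕ)) (r : Fin s) (β : Fin n →₀ ℕ) : Prop :=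
  (∃ γ, β = μ r + γ) ∧ ∀ i : Fin s, i < r → ¬ ∃ γ, β = μ i + γ

/-- Membership in `Δ̄_F = ℕⁿ ∖ ⋃_{i=1}^s Δ_{F,i} = ℕⁿ ∖ ⋃_{i=1}^s (μ i + ℕⁿ)`. -/
def InDeltaBar {n s : ℕ} (μ : Fin s → (Fin n →₀ ℕ)) (β : Fin n →₀ ℕ) : Prop :=
  ∀ i : Fin s, ¬ ∃ γ, β = μ i + γ


open MvPowerSeries Finset

theorem WellFounded.existsUnique_isFixedPt {α β : Type*} [Nonempty β] {r : α → α → Prop}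
    (hr : WellFounded r) (F : (α → β) → α → β)
    (hF : ∀ v w a, (∀ b, r b a → v b = w b) → F v a = F w a) :
    ∃! v, Function.IsFixedPt F v := by
  classical
  let v := hr.fix fun a rec => F (fun b => if h : r b a then rec b h else Classical.arbitrary β) a
  have hv : Function.IsFixedPt F v := funext fun a => by
    rw [show v a = _ from hr.fix_eq _ a]
    exact hF _ _ a fun b hb => by rw [dif_pos hb]
  refine ⟨v, hv, fun w hw => funext fun a => ?_⟩
  induction a using hr.induction with
  | _ a ih => rw [← hw, ← hv]; exact hF w v a ih

theorem MvPowerSeries.exists_coeff_ne_zero_of_coeff_mul_ne_zero {σ R : Type*} [Semiring R]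
    {φ ψ : MvPowerSeries σ R} {β : σ →₀ ℕ} (h : coeff β (φ * ψ) ≠ 0) :
    ∃ a b, a + b = β ∧ coeff a φ ≠ 0 ∧ coeff b ψ ≠ 0 := by
  classical
  rw [coeff_mul] at h
  obtain ⟨⟨a, b⟩, hab, hne⟩ := exists_ne_zero_of_sum_ne_zero h
  exact ⟨a, b, mem_antidiagonal.1 hab, left_ne_zero_of_mul hne, right_ne_zero_of_mul hne⟩

def strictPart {α : Type*} (le : α → α → Prop) (a b : α) : Prop :=
  le a b ∧ a ≠ b

namespace IsAdditiveTotalOrder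

variable {n : ℕ} {le : (Fin n →₀ ℕ) → (Fin n →₀ ℕ) → Prop}

theorem add_left (hle : IsAdditiveTotalOrder le) {α β : Fin n →₀ ℕ} (h : le α β)
    (γ : Fin n →₀ ℕ) : le (γ + α) (γ + β) := by
  simpa only [add_comm γ] using hle.add_right α β γ h

theorem le_of_finsupp_le (hle : IsAdditiveTotalOrder le) {α β : Fin n →₀ ℕ} (h : α ≤ β) :
    le α β := by
  obtain ⟨γ, rfl⟩ := exists_add_of_le h
  simpa only [add_zero] using hle.add_left (hle.zero_le γ) α

theorem strictPart_add_left (hle : IsAdditiveTotalOrder le) {α β : Fin n →₀ ℕ}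
    (h : strictPart le α β) (γ : Fin n →₀ ℕ) : strictPart le (γ + α) (γ + β) :=
  ⟨hle.add_left h.1 γ, fun he => h.2 (add_left_cancel he)⟩

theorem strictPart_trans (hle : IsAdditiveTotalOrder le) {α β γ : Fin n →₀ ℕ}
    (h₁ : strictPart le α β) (h₂ : strictPart le β γ) : strictPart le α γ := by
  refine ⟨hle.trans _ _ _ h₁.1 h₂.1, ?_⟩
  rintro rfl
  exact h₂.2 (hle.antisymm _ _ h₂.1 h₁.1)

theorem wellFounded_strictPart (hle : IsAdditiveTotalOrder le) :
    WellFounded (strictPart le) := by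
  have : IsStrictOrder _ (strictPart le) :=
    { irrefl := fun _ h => h.2 rfl, trans := fun _ _ _ => hle.strictPart_trans }
  refine RelEmbedding.wellFounded_iff_isEmpty.2 ⟨fun e => ?_⟩
  obtain ⟨m, m', hmm', hdvd⟩ := wellQuasiOrdered_le e
  have hlt : strictPart le (e m') (e m) := e.map_rel_iff.2 hmm'
  exact hlt.2 (hle.antisymm _ _ hlt.1 (hle.le_of_finsupp_le hdvd))

end IsAdditiveTotalOrder

section Delta

variable {n s : ℕ} {μ : Fin s → (Fin n →₀ ℕ)} {β : Fin n →₀ ℕ}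

theorem InDelta.le {i : Fin s} (h : InDelta μ i β) : μ i ≤ β :=
  le_iff_exists_add.2 h.1

theorem InDelta.unique {i j : Fin s} (hi : InDelta μ i β) (hj : InDelta μ j β) : i = j := by
  rcases lt_trichotomy i j with h | rfl | h
  · exact absurd hi.1 (hj.2 i h)
  · rfl
  · exact absurd hj.1 (hi.2 j h)

theorem InDelta.not_inDeltaBar {i : Fin s} (h : InDelta μ i β) : ¬ InDeltaBar μ β :=
  fun hbar => hbar i h.1

theorem exists_inDelta_of_not_inDeltaBar (h : ¬ InDeltaBar μ β) : ∃ i, InDelta μ i β := by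
  simp only [InDeltaBar, not_forall, not_not] at h
  obtain ⟨i, hi, hmin⟩ := wellFounded_lt.has_min {i | ∃ γ, β = μ i + γ} h
  exact ⟨i, hi, fun j hj hj' => hmin j hj' hj⟩

open scoped Classical in
theorem sum_ite_inDelta_add_ite_inDeltaBar {M : Type*} [AddCommMonoid M] (x : M) :
    (∑ i, if InDelta μ i β then x else 0) + (if InDeltaBar μ β then x else 0) = x := by
  by_cases h : InDeltaBar μ β
  · rw [if_pos h, sum_eq_zero fun i _ => if_neg fun hi => hi.not_inDeltaBar h, zero_add]
  · obtain ⟨i, hi⟩ := exists_inDelta_of_not_inDeltaBar h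
    rw [if_neg h, add_zero, sum_eq_single i (fun j _ hj => if_neg fun hj' => hj (hj'.unique hi))
      (by simp), if_pos hi]

end Delta

section Division

open scoped Classical

variable {n s : ℕ} {k : Type*} [Field k] (f : Fin s → MvPowerSeries (Fin n) k)
  (μ : Fin s → (Fin n →₀ ℕ))

noncomputable def divQuot (p : MvPowerSeries (Fin n) k) (i : Fin s) : MvPowerSeries (Fin n) k :=
  fun γ => if InDelta μ i (γ + μ i) then (coeff (μ i) (f i))⁻¹ * coeff (γ + μ i) p else 0

noncomputable def divRem (p : MvPowerSeries (Fin n) k) : MvPowerSeries (Fin n) k :=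
  fun β => if InDeltaBar μ β then coeff β p else 0

noncomputable def leadPart (q : Fin s → MvPowerSeries (Fin n) k) (r : MvPowerSeries (Fin n) k) :
    MvPowerSeries (Fin n) k :=
  ∑ i, q i * monomial (μ i) (coeff (μ i) (f i)) + r

noncomputable def tailPart (q : Fin s → MvPowerSeries (Fin n) k) : MvPowerSeries (Fin n) k :=
  ∑ i, q i * (f i - monomial (μ i) (coeff (μ i) (f i)))

variable {f μ}

theorem coeff_divQuot (p : MvPowerSeries (Fin n) k) (i : Fin s) (γ : Fin n →₀ ℕ) :
    coeff γ (divQuot f μ p i) =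
      if InDelta μ i (γ + μ i) then (coeff (μ i) (f i))⁻¹ * coeff (γ + μ i) p else 0 :=
  rfl

theorem coeff_divRem (p : MvPowerSeries (Fin n) k) (β : Fin n →₀ ℕ) :
    coeff β (divRem μ p) = if InDeltaBar μ β then coeff β p else 0 :=
  rfl

theorem inDelta_of_mem_psupp_divQuot {p : MvPowerSeries (Fin n) k} {i : Fin s} :
    ∀ γ ∈ psupp (divQuot f μ p i), InDelta μ i (γ + μ i) := by
  intro γ hγ
  by_contra h
  exact hγ (if_neg h)

theorem inDeltaBar_of_mem_psupp_divRem {p : MvPowerSeries (Fin n) k} :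
    ∀ β ∈ psupp (divRem μ p), InDeltaBar μ β := by
  intro β hβ
  by_contra h
  exact hβ (if_neg h)

theorem coeff_ne_zero_of_coeff_divQuot_ne_zero {p : MvPowerSeries (Fin n) k} {i : Fin s}
    {γ : Fin n →₀ ℕ} (h : coeff γ (divQuot f μ p i) ≠ 0) : coeff (γ + μ i) p ≠ 0 := by
  rw [coeff_divQuot] at h
  split_ifs at h
  · exact right_ne_zero_of_mul h
  · exact absurd rfl h

theorem coeff_mul_monomial_of_inDelta {q : MvPowerSeries (Fin n) k} {i : Fin s}
    (hq : ∀ γ ∈ psupp q, InDelta μ i (γ + μ i)) (c : k) (β : Fin n →₀ ℕ) :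
    coeff β (q * monomial (μ i) c) = if InDelta μ i β then coeff (β - μ i) q * c else 0 := by
  rw [coeff_mul_monomial]
  by_cases hβ : InDelta μ i β
  · rw [if_pos hβ.le, if_pos hβ]
  · rw [if_neg hβ]
    split_ifs with hle
    · have hq0 : coeff (β - μ i) q = 0 := by
        by_contra h
        exact hβ (by simpa only [tsub_add_cancel_of_le hle] using hq _ h)
      rw [hq0, zero_mul]
    · rfl

theorem leadPart_divQuot_divRem (hlc : ∀ i, coeff (μ i) (f i) ≠ 0)
    (p : MvPowerSeries (Fin n) k) : leadPart f μ (divQuot f μ p) (divRem μ p) = p := by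
  ext β
  have hterm : ∀ i, coeff β (divQuot f μ p i * monomial (μ i) (coeff (μ i) (f i))) =
      if InDelta μ i β then coeff β p else 0 := fun i => by
    rw [coeff_mul_monomial_of_inDelta inDelta_of_mem_psupp_divQuot]
    split_ifs with h
    · rw [coeff_divQuot, tsub_add_cancel_of_le h.le, if_pos h, mul_right_comm,
        inv_mul_cancel₀ (hlc i), one_mul]
    · rfl
  rw [leadPart, map_add, map_sum, coeff_divRem]
  simp only [hterm]
  exact sum_ite_inDelta_add_ite_inDeltaBar _

variable {q : Fin s → MvPowerSeries (Fin n) k} {r : MvPowerSeries (Fin n) k}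

theorem coeff_leadPart_of_inDelta (hq : ∀ i, ∀ γ ∈ psupp (q i), InDelta μ i (γ + μ i))
    (hr : ∀ β ∈ psupp r, InDeltaBar μ β) {i : Fin s} {β : Fin n →₀ ℕ} (h : InDelta μ i β) :
    coeff β (leadPart f μ q r) = coeff (β - μ i) (q i) * coeff (μ i) (f i) := by
  have hr0 : coeff β r = 0 := by
    by_contra hβ
    exact h.not_inDeltaBar (hr β hβ)
  rw [leadPart, map_add, map_sum, hr0, add_zero,
    sum_eq_single i fun j _ hj => by
      rw [coeff_mul_monomial_of_inDelta (hq j), if_neg fun hj' => hj (hj'.unique h)],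
    coeff_mul_monomial_of_inDelta (hq i), if_pos h]
  simp

theorem coeff_leadPart_of_inDeltaBar (hq : ∀ i, ∀ γ ∈ psupp (q i), InDelta μ i (γ + μ i))
    {β : Fin n →₀ ℕ} (h : InDeltaBar μ β) : coeff β (leadPart f μ q r) = coeff β r := by
  rw [leadPart, map_add, map_sum, sum_eq_zero fun j _ => by
    rw [coeff_mul_monomial_of_inDelta (hq j), if_neg fun hj => hj.not_inDeltaBar h], zero_add]

theorem divQuot_leadPart (hlc : ∀ i, coeff (μ i) (f i) ≠ 0)
    (hq : ∀ i, ∀ γ ∈ psupp (q i), InDelta μ i (γ + μ i)) (hr : ∀ β ∈ psupp r, InDeltaBar μ β) :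
    divQuot f μ (leadPart f μ q r) = q := by
  ext i γ
  rw [coeff_divQuot]
  split_ifs with h
  · rw [coeff_leadPart_of_inDelta hq hr h, add_tsub_cancel_right, mul_comm,
      mul_inv_cancel_right₀ (hlc i)]
  · by_contra hγ
    exact h (hq i γ (Ne.symm hγ))

theorem divRem_leadPart (hq : ∀ i, ∀ γ ∈ psupp (q i), InDelta μ i (γ + μ i))
    (hr : ∀ β ∈ psupp r, InDeltaBar μ β) : divRem μ (leadPart f μ q r) = r := by
  ext β
  rw [coeff_divRem]
  split_ifs with h
  · exact coeff_leadPart_of_inDeltaBar hq h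
  · by_contra hβ
    exact h (hr β (Ne.symm hβ))

theorem sum_mul_add_eq_leadPart_add_tailPart (q : Fin s → MvPowerSeries (Fin n) k)
    (r : MvPowerSeries (Fin n) k) : ∑ i, q i * f i + r = leadPart f μ q r + tailPart f μ q := by
  simp only [leadPart, tailPart, mul_sub, sum_sub_distrib]
  abel

theorem strictPart_of_coeff_sub_monomial_ne_zero {le : (Fin n →₀ ℕ) → (Fin n →₀ ℕ) → Prop}
    {φ : MvPowerSeries (Fin n) k} {m b : Fin n →₀ ℕ} (hm : IsLM le φ m)
    (h : coeff b (φ - monomial m (coeff m φ)) ≠ 0) : strictPart le m b := by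
  rw [map_sub, coeff_monomial] at h
  split_ifs at h with hb
  · exact absurd (sub_self _) (hb ▸ h)
  · exact ⟨hm.2 b (show coeff b φ ≠ 0 by simpa only [sub_zero] using h), Ne.symm hb⟩

variable {le : (Fin n →₀ ℕ) → (Fin n →₀ ℕ) → Prop}

theorem coeff_tailPart_divQuot_congr (hle : IsAdditiveTotalOrder le)
    (hμ : ∀ i, IsLM le (f i) (μ i)) {p p' : MvPowerSeries (Fin n) k} {β : Fin n →₀ ℕ}
    (h : ∀ γ, strictPart le γ β → coeff γ p = coeff γ p') :
    coeff β (tailPart f μ (divQuot f μ p)) = coeff β (tailPart f μ (divQuot f μ p')) := by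
  simp only [tailPart, map_sum, coeff_mul]
  refine sum_congr rfl fun i _ => sum_congr rfl fun ⟨a, b⟩ hab => ?_
  by_cases hb : coeff b (f i - monomial (μ i) (coeff (μ i) (f i))) = 0
  · rw [hb, mul_zero, mul_zero]
  · have hlt := hle.strictPart_add_left (strictPart_of_coeff_sub_monomial_ne_zero (hμ i) hb) a
    rw [mem_antidiagonal.1 hab] at hlt
    rw [coeff_divQuot, coeff_divQuot, h _ hlt]

theorem exists_strictPart_of_coeff_tailPart_divQuot_ne_zero (hle : IsAdditiveTotalOrder le)
    (hμ : ∀ i, IsLM le (f i) (μ i)) {p : MvPowerSeries (Fin n) k} {β : Fin n →₀ ℕ}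
    (h : coeff β (tailPart f μ (divQuot f μ p)) ≠ 0) :
    ∃ γ, strictPart le γ β ∧ coeff γ p ≠ 0 := by
  rw [tailPart, map_sum] at h
  obtain ⟨i, -, hi⟩ := exists_ne_zero_of_sum_ne_zero h
  obtain ⟨a, b, rfl, ha, hb⟩ := exists_coeff_ne_zero_of_coeff_mul_ne_zero hi
  exact ⟨a + μ i, hle.strictPart_add_left (strictPart_of_coeff_sub_monomial_ne_zero (hμ i) hb) a,
    coeff_ne_zero_of_coeff_divQuot_ne_zero ha⟩

theorem existsUnique_add_tailPart_divQuot_eq (hle : IsAdditiveTotalOrder le)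
    (hμ : ∀ i, IsLM le (f i) (μ i)) (g : MvPowerSeries (Fin n) k) :
    ∃! p, p + tailPart f μ (divQuot f μ p) = g := by
  have hfix := hle.wellFounded_strictPart.existsUnique_isFixedPt
    (fun p : MvPowerSeries (Fin n) k => g - tailPart f μ (divQuot f μ p))
    fun p p' β h => by
      change coeff β (g - _) = coeff β (g - _)
      rw [map_sub, map_sub, coeff_tailPart_divQuot_congr hle hμ h]
  refine existsUnique_congr (fun p => ?_) |>.1 hfix
  change g - _ = p ↔ _
  rw [sub_eq_iff_eq_add, eq_comm, add_comm]

theorem le_of_mem_psupp_of_add_tailPart_divQuot_eq (hle : IsAdditiveTotalOrder le)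
    (hμ : ∀ i, IsLM le (f i) (μ i)) {p g : MvPowerSeries (Fin n) k}
    (hp : p + tailPart f μ (divQuot f μ p) = g) {m : Fin n →₀ ℕ}
    (hm : ∀ γ ∈ psupp g, le m γ) : ∀ β ∈ psupp p, le m β := by
  intro β
  induction β using hle.wellFounded_strictPart.induction with
  | _ β ih =>
    intro hβ
    have hpβ : coeff β p = coeff β g - coeff β (tailPart f μ (divQuot f μ p)) := by
      rw [← hp, map_add, add_sub_cancel_right]
    by_cases hg : coeff β g = 0
    · obtain ⟨γ, hγ, hγp⟩ := exists_strictPart_of_coeff_tailPart_divQuot_ne_zero hle hμ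
        fun h => hβ (by rw [hpβ, hg, h, sub_zero])
      exact hle.trans _ _ _ (ih γ hγ hγp) hγ.1
    · exact hm β hg

end Division

theorem statement13_general
    {n s : ℕ} {k : Type*} [Field k]
    (le : (Fin n →₀ ℕ) → (Fin n →₀ ℕ) → Prop) (hle : IsAdditiveTotalOrder le)
    (f : Fin s → MvPowerSeries (Fin n) k)
    (μ : Fin s → (Fin n →₀ ℕ)) (hμ : ∀ i, IsLM le (f i) (μ i))
    (g : MvPowerSeries (Fin n) k) :
    ∃ (q : Fin s → MvPowerSeries (Fin n) k) (r : MvPowerSeries (Fin n) k),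
      (g = ∑ i, q i * f i + r) ∧
      (∀ i, ∀ β ∈ psupp (q i), InDelta μ i (β + μ i)) ∧
      (∀ β ∈ psupp r, InDeltaBar μ β) ∧
      (∀ i, ∀ lmg lmqf, IsLM le g lmg → IsLM le (q i * f i) lmqf → le lmg lmqf) ∧
      (∀ (q' : Fin s → MvPowerSeries (Fin n) k) (r' : MvPowerSeries (Fin n) k),
        (g = ∑ i, q' i * f i + r') →
        (∀ i, ∀ β ∈ psupp (q' i), InDelta μ i (β + μ i)) →
        (∀ β ∈ psupp r', InDeltaBar μ β) →
        q' = q ∧ r' = r) := by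
  have hlc : ∀ i, coeff (μ i) (f i) ≠ 0 := fun i => (hμ i).1
  obtain ⟨p, hp, hp_unique⟩ := existsUnique_add_tailPart_divQuot_eq hle hμ g
  refine ⟨divQuot f μ p, divRem μ p, ?_, fun i => inDelta_of_mem_psupp_divQuot,
    inDeltaBar_of_mem_psupp_divRem, ?_, ?_⟩
  · rw [sum_mul_add_eq_leadPart_add_tailPart, leadPart_divQuot_divRem hlc, hp]
  · intro i lmg lmqf hg hqf
    obtain ⟨a, b, rfl, ha, hb⟩ := exists_coeff_ne_zero_of_coeff_mul_ne_zero hqf.1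
    exact hle.trans _ _ _
      (le_of_mem_psupp_of_add_tailPart_divQuot_eq hle hμ hp hg.2 _
        (coeff_ne_zero_of_coeff_divQuot_ne_zero ha))
      (hle.add_left ((hμ i).2 b hb) a)
  · intro q' r' hg hq' hr'
    have hp' : leadPart f μ q' r' = p := hp_unique _ <| show _ + _ = g by
      rw [divQuot_leadPart hlc hq' hr', ← sum_mul_add_eq_leadPart_add_tailPart, hg]
    exact ⟨by rw [← hp', divQuot_leadPart hlc hq' hr'], by rw [← hp', divRem_leadPart hq' hr']⟩

/-- multivariate right-division for commutative power series over a finite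
field.  Let `k` be a finite field, `R = k[[x_1, …, x_n]]`, and `⪯` an additive total order
on `ℕⁿ`.  Let `F = (f_1, …, f_s)` be a tuple of nonzero elements of `R` with least monomials
`μ i = LM(f_i)`.  Then every `g ∈ R` can be written as `g = q_1 f_1 + ⋯ + q_s f_s + r` where
`supp(q_i) + LM(f_i) ⊆ Δ_{F,i}` for all `i` and `supp(r) ⊆ Δ̄_F`; the elements
`q_1, …, q_s, r` with these properties are unique; and moreover `LM(g) ⪯ LM(q_i f_i)`
for every `i` with `q_i f_i ≠ 0`. -/
theorem statement13
    {n s : ℕ} {k : Type*} [Field k] [Finite k]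
    (le : (Fin n →₀ ℕ) → (Fin n →₀ ℕ) → Prop) (hle : IsAdditiveTotalOrder le)
    (f : Fin s → MvPowerSeries (Fin n) k) (hf : ∀ i, f i ≠ 0)
    (μ : Fin s → (Fin n →₀ ℕ)) (hμ : ∀ i, IsLM le (f i) (μ i))
    (g : MvPowerSeries (Fin n) k) :
    ∃ (q : Fin s → MvPowerSeries (Fin n) k) (r : MvPowerSeries (Fin n) k),
      (g = ∑ i, q i * f i + r) ∧
      (∀ i, ∀ β ∈ psupp (q i), InDelta μ i (β + μ i)) ∧
      (∀ β ∈ psupp r, InDeltaBar μ β) ∧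
      (∀ i, ∀ lmg lmqf, IsLM le g lmg → IsLM le (q i * f i) lmqf → le lmg lmqf) ∧
      (∀ (q' : Fin s → MvPowerSeries (Fin n) k) (r' : MvPowerSeries (Fin n) k),
        (g = ∑ i, q' i * f i + r') →
        (∀ i, ∀ β ∈ psupp (q' i), InDelta μ i (β + μ i)) →
        (∀ β ∈ psupp r', InDeltaBar μ β) →
        q' = q ∧ r' = r) :=
  statement13_general le hle f μ hμ g
end

section
/- (Buchberger's criterion, commutative power series case.) Let k be a finite field, R = k[[x_1, …, x_n]], and let ⪯ be an additive total order on ℕⁿ. Suppose I is a nonzero ideal of R and G = (g_1, …, g_s) is a tuple of nonzero elements of I generating I as an ideal. Then G is a Gröbner basis for I if and only if for all 1 ≤ i, j ≤ s the remainder of the S-element S(g_i, g_j) on division by G is zero. -/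
/-- `LM(I)`: the set of least monomials of nonzero elements of an ideal `I`. -/
def LMset {n : ℕ} {k : Type*} [Semiring k] (le : (Fin n →₀ ℕ) → (Fin n →₀ ℕ) → Prop)
    (I : Ideal (MvPowerSeries (Fin n) k)) : Set (Fin n →₀ ℕ) :=
  {μ | ∃ f ∈ I, IsLM le f μ}

/-- The S-element of `g, g'` with least monomials `γ, γ'`:
`S(g, g') = LC(g)⁻¹ x^{(γ∨γ')−γ} g − LC(g')⁻¹ x^{(γ∨γ')−γ'} g'`, where `γ ∨ γ'` is the
componentwise maximum and `LC(g) = g_γ`, `LC(g') = g'_{γ'}`. -/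
noncomputable def Sel {n : ℕ} {k : Type*} [Field k]
    (g g' : MvPowerSeries (Fin n) k) (γ γ' : Fin n →₀ ℕ) : MvPowerSeries (Fin n) k :=
  (MvPowerSeries.coeff γ g)⁻¹ • (MvPowerSeries.monomial (γ ⊔ γ' - γ) (1 : k) * g)
    - (MvPowerSeries.coeff γ' g')⁻¹ • (MvPowerSeries.monomial (γ ⊔ γ' - γ') (1 : k) * g')

/-!
Every additive total order on `ℕⁿ` is a well-order (Dickson's lemma), so the coefficients of the
quotients and of the remainder of a division can be defined at once by well-founded recursion
along `⪯`. If `G` is a Gröbner basis, the remainder of an element of `I`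
lies in `I` but has no least monomial in `LM(I)`, so it vanishes.

Conversely, let `f ∈ I` have least monomial `ν`. Among the representations `f = ∑ h_l g_l` we
push every term `μ_l + δ` (`δ ∈ supp h_l`) up to `ν`. At a level `γ ≺ ν` the contributions at `γ`
must cancel, and two of them can be merged using the standard representation of their
S-element, whose terms lie strictly above `γ`. Limit levels are reached by compactness of
`k[[x]]ˢ` for finite `k` (Cantor's intersection theorem). Once all terms lie above `ν`, the
coefficient of `x^ν` in `f` is a sum of products of leading coefficients, so some `μ_l ≤ ν`.
-/

open MvPowerSeries Finset

namespace Groebner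

def Lt {n : ℕ} (le : (Fin n →₀ ℕ) → (Fin n →₀ ℕ) → Prop) (α β : Fin n →₀ ℕ) : Prop :=
  le α β ∧ ¬ le β α

end Groebner

namespace IsAdditiveTotalOrder

open Groebner

variable {n : ℕ} {le : (Fin n →₀ ℕ) → (Fin n →₀ ℕ) → Prop} (hle : IsAdditiveTotalOrder le)
  {α β γ : Fin n →₀ ℕ}
include hle

theorem refl (α : Fin n →₀ ℕ) : le α α :=
  (hle.total α α).elim id id

theorem of_le (h : α ≤ β) : le α β := by
  obtain ⟨γ, rfl⟩ := le_iff_exists_add.mp h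
  simpa [add_comm] using hle.add_right 0 γ α (hle.zero_le γ)

theorem lt_iff_not_le : Lt le α β ↔ ¬ le β α :=
  ⟨And.right, fun h => ⟨(hle.total α β).resolve_right h, h⟩⟩

theorem le_of_not_lt (h : ¬ Lt le α β) : le β α :=
  not_not.mp (mt hle.lt_iff_not_le.mpr h)

theorem eq_of_le_of_not_lt (h₁ : le α β) (h₂ : ¬ Lt le α β) : α = β :=
  hle.antisymm _ _ h₁ (hle.le_of_not_lt h₂)

theorem lt_of_lt_of_le (h₁ : Lt le α β) (h₂ : le β γ) : Lt le α γ :=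
  ⟨hle.trans _ _ _ h₁.1 h₂, fun h => h₁.2 (hle.trans _ _ _ h₂ h)⟩

theorem lt_of_le_of_lt (h₁ : le α β) (h₂ : Lt le β γ) : Lt le α γ :=
  ⟨hle.trans _ _ _ h₁ h₂.1, fun h => h₂.2 (hle.trans _ _ _ h h₁)⟩

theorem add_lt_add_right (h : Lt le α β) (γ : Fin n →₀ ℕ) : Lt le (α + γ) (β + γ) := by
  refine hle.lt_iff_not_le.mpr fun h' => h.2 ?_
  rcases hle.total β α with hβα | hαβ
  · exact hβα
  · rw [add_right_cancel (hle.antisymm _ _ h' (hle.add_right _ _ _ hαβ))]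
    exact hle.refl α

theorem wellFounded : WellFounded (Lt le) := by
  let _ : IsPreorder (Fin n →₀ ℕ) le := { refl := hle.refl, trans := hle.trans }
  refine WellQuasiOrdered.wellFounded fun f => ?_
  obtain ⟨i, j, hij, hle_ij⟩ := wellQuasiOrdered_le f
  exact ⟨i, j, hij, hle.of_le hle_ij⟩

theorem exists_least {S : Set (Fin n →₀ ℕ)} (hS : S.Nonempty) : ∃ m ∈ S, ∀ x ∈ S, le m x := by
  obtain ⟨m, hm, hmin⟩ := hle.wellFounded.has_min S hS
  exact ⟨m, hm, fun x hx => hle.le_of_not_lt (hmin x hx)⟩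

end IsAdditiveTotalOrder

namespace Groebner

open scoped Classical

variable {n s : ℕ} {le : (Fin n →₀ ℕ) → (Fin n →₀ ℕ) → Prop}

section LeastMonomial

variable {k : Type*} [Semiring k]

@[simp]
theorem mem_psupp {f : MvPowerSeries (Fin n) k} {β : Fin n →₀ ℕ} :
    β ∈ psupp f ↔ coeff β f ≠ 0 :=
  Iff.rfl

theorem _root_.IsLM.coeff_eq_zero_of_lt {f : MvPowerSeries (Fin n) k} {ν β : Fin n →₀ ℕ}
    (hf : IsLM le f ν) (h : Lt le β ν) : coeff β f = 0 := by
  by_contra hβ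
  exact h.2 (hf.2 β hβ)

variable (hle : IsAdditiveTotalOrder le)
include hle

theorem exists_isLM {f : MvPowerSeries (Fin n) k} (hf : f ≠ 0) : ∃ ν, IsLM le f ν := by
  have hsupp : (psupp f).Nonempty := by
    by_contra h
    refine hf (ext fun β => ?_)
    rw [map_zero]
    by_contra hβ
    exact h ⟨β, hβ⟩
  exact hle.exists_least hsupp

theorem _root_.IsLM.monomial_mul {f : MvPowerSeries (Fin n) k} {ν : Fin n →₀ ℕ} (hf : IsLM le f ν)
    (γ : Fin n →₀ ℕ) : IsLM le (monomial γ 1 * f) (γ + ν) := by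
  refine ⟨?_, fun β hβ => ?_⟩
  · simpa [psupp, coeff_monomial_mul] using hf.1
  · rw [mem_psupp, coeff_monomial_mul] at hβ
    split_ifs at hβ with hγβ
    · have := hle.add_right _ _ γ (hf.2 (β - γ) (by simpa using hβ))
      rwa [tsub_add_cancel_of_le hγβ, add_comm] at this
    · exact absurd rfl hβ

end LeastMonomial

section Partition

variable {μ : Fin s → (Fin n →₀ ℕ)} {β : Fin n →₀ ℕ}

theorem inDelta_iff {l : Fin s} : InDelta μ l β ↔ μ l ≤ β ∧ ∀ i < l, ¬ μ i ≤ β := by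
  simp only [InDelta, le_iff_exists_add]

theorem inDeltaBar_iff : InDeltaBar μ β ↔ ∀ i, ¬ μ i ≤ β := by
  simp only [InDeltaBar, le_iff_exists_add]

theorem _root_.InDelta.unique_s17 {l l' : Fin s} (h : InDelta μ l β) (h' : InDelta μ l' β) :
    l = l' := by
  rw [inDelta_iff] at h h'
  by_contra hne
  rcases lt_or_gt_of_ne hne with hlt | hlt
  exacts [h'.2 l hlt h.1, h.2 l' hlt h'.1]

theorem exists_inDelta_of_not_inDeltaBar (h : ¬ InDeltaBar μ β) : ∃ l, InDelta μ l β := by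
  rw [inDeltaBar_iff] at h
  push Not at h
  obtain ⟨l, hl, hmin⟩ := wellFounded_lt.has_min {i | μ i ≤ β} h
  exact ⟨l, inDelta_iff.mpr ⟨hl, fun i hi hiβ => hmin i hiβ hi⟩⟩

/-- The regions `Δ_l` and `Δ̄` partition `ℕⁿ`. -/
theorem sum_ite_inDelta_add_ite_inDeltaBar {M : Type*} [AddCommMonoid M] (x : M) :
    (∑ l, if InDelta μ l β then x else 0) + (if InDeltaBar μ β then x else 0) = x := by
  by_cases hbar : InDeltaBar μ β
  · have hΔ : ∀ l, ¬ InDelta μ l β := fun l hl =>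
      inDeltaBar_iff.mp hbar l (inDelta_iff.mp hl).1
    simp [hΔ, hbar]
  · obtain ⟨l₀, hl₀⟩ := exists_inDelta_of_not_inDeltaBar hbar
    have hΔ : ∀ l, InDelta μ l β ↔ l₀ = l := fun l => ⟨hl₀.unique_s17, fun h => h ▸ hl₀⟩
    simp [hΔ, hbar]

end Partition

section Combination

variable {k : Type*} [Semiring k] (hle : IsAdditiveTotalOrder le)
include hle

/-- Products landing above `β` vanish because `ν` is the least monomial of `g`. -/
theorem coeff_mul_eq_sum_lt_add {g : MvPowerSeries (Fin n) k} {ν : Fin n →₀ ℕ}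
    (hg : IsLM le g ν) (h : MvPowerSeries (Fin n) k) (β : Fin n →₀ ℕ) :
    coeff β (h * g) =
      (∑ p ∈ antidiagonal β, if Lt le (ν + p.1) β then coeff p.1 h * coeff p.2 g else 0) +
        if ν ≤ β then coeff (β - ν) h * coeff ν g else 0 := by
  have hsplit : ∀ p ∈ antidiagonal β, coeff p.1 h * coeff p.2 g =
      (if Lt le (ν + p.1) β then coeff p.1 h * coeff p.2 g else 0) +
        if p = (β - ν, ν) then coeff p.1 h * coeff p.2 g else 0 := by
    intro p hp
    rw [HasAntidiagonal.mem_antidiagonal] at hp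
    by_cases hg0 : coeff p.2 g = 0
    · simp [hg0]
    have hp_le : le (ν + p.1) β := by
      simpa [add_comm p.2, hp] using hle.add_right _ _ p.1 (hg.2 _ hg0)
    by_cases hlt : Lt le (ν + p.1) β
    · have hne : p ≠ (β - ν, ν) := by
        rintro rfl
        rw [add_comm, hp] at hlt
        exact hlt.2 hlt.1
      rw [if_pos hlt, if_neg hne, add_zero]
    · have heq : ν + p.1 = β := hle.eq_of_le_of_not_lt hp_le hlt
      have hp' : p = (β - ν, ν) := by
        refine Prod.ext (by simp [← heq]) (add_left_cancel (a := p.1) ?_)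
        rw [hp, ← heq, add_comm]
      rw [if_neg hlt, if_pos hp', zero_add]
  rw [coeff_mul, sum_congr rfl hsplit, sum_add_distrib, sum_ite_eq']
  simp only [HasAntidiagonal.mem_antidiagonal, tsub_add_cancel_iff_le]

end Combination

section Division

variable {k : Type*} [Field k] (hle : IsAdditiveTotalOrder le)
  (g : Fin s → MvPowerSeries (Fin n) k) (μ : Fin s → (Fin n →₀ ℕ)) (f : MvPowerSeries (Fin n) k)

/-- `coeff β f` minus the contributions at `β` of the quotient terms strictly below `β`; it is
then the leading contribution of the quotient or the remainder whose region contains `β`. -/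
noncomputable def divisionCoeff : (Fin n →₀ ℕ) → k :=
  hle.wellFounded.fix fun β c =>
    coeff β f - ∑ l, ∑ p ∈ antidiagonal β,
      if hlt : Lt le (μ l + p.1) β then
        (if InDelta μ l (μ l + p.1) then (coeff (μ l) (g l))⁻¹ * c _ hlt else 0) * coeff p.2 (g l)
      else 0

noncomputable def divisionQuotient (l : Fin s) : MvPowerSeries (Fin n) k := fun δ =>
  if InDelta μ l (μ l + δ) then (coeff (μ l) (g l))⁻¹ * divisionCoeff hle g μ f (μ l + δ) else 0

noncomputable def divisionRemainder : MvPowerSeries (Fin n) k := fun β =>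
  if InDeltaBar μ β then divisionCoeff hle g μ f β else 0

theorem divisionCoeff_eq (β : Fin n →₀ ℕ) :
    divisionCoeff hle g μ f β = coeff β f - ∑ l, ∑ p ∈ antidiagonal β,
      if Lt le (μ l + p.1) β then
        coeff p.1 (divisionQuotient hle g μ f l) * coeff p.2 (g l) else 0 := by
  rw [divisionCoeff, WellFounded.fix_eq]
  simp only [dite_eq_ite]
  rfl

variable {g μ}
include hle

theorem sum_divisionQuotient_mul_add_divisionRemainder (hμ : ∀ l, IsLM le (g l) (μ l)) :
    ∑ l, divisionQuotient hle g μ f l * g l + divisionRemainder hle g μ f = f := by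
  ext β
  have hlead : ∀ l, (if μ l ≤ β then
      coeff (β - μ l) (divisionQuotient hle g μ f l) * coeff (μ l) (g l) else 0) =
        if InDelta μ l β then divisionCoeff hle g μ f β else 0 := by
    intro l
    by_cases hl : μ l ≤ β
    · have hq : coeff (β - μ l) (divisionQuotient hle g μ f l) =
          if InDelta μ l β then (coeff (μ l) (g l))⁻¹ * divisionCoeff hle g μ f β else 0 := by
        show (if InDelta μ l (μ l + (β - μ l)) then _ else 0) = _
        rw [add_tsub_cancel_of_le hl]
      have hLC : coeff (μ l) (g l) ≠ 0 := (hμ l).1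
      rw [if_pos hl, hq]
      split_ifs
      · field_simp
      · exact zero_mul _
    · simp [hl, inDelta_iff]
  have hrem : coeff β (divisionRemainder hle g μ f) =
      if InDeltaBar μ β then divisionCoeff hle g μ f β else 0 := rfl
  simp only [map_add, map_sum, coeff_mul_eq_sum_lt_add hle (hμ _), sum_add_distrib, hlead, hrem]
  rw [add_assoc, sum_ite_inDelta_add_ite_inDeltaBar, divisionCoeff_eq, add_sub_cancel]

theorem exists_division (hμ : ∀ l, IsLM le (g l) (μ l)) :
    ∃ (q : Fin s → MvPowerSeries (Fin n) k) (r : MvPowerSeries (Fin n) k),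
      f = ∑ l, q l * g l + r ∧ (∀ l, ∀ β ∈ psupp (q l), InDelta μ l (β + μ l)) ∧
        ∀ β ∈ psupp r, InDeltaBar μ β := by
  refine ⟨divisionQuotient hle g μ f, divisionRemainder hle g μ f,
    (sum_divisionQuotient_mul_add_divisionRemainder hle f hμ).symm, fun l β hβ => ?_,
    fun β hβ => ?_⟩
  · rw [add_comm]
    by_contra hΔ
    exact hβ (if_neg hΔ)
  · by_contra hΔ
    exact hβ (if_neg hΔ)

end Division

section TermsAbove

variable {k : Type*} [Semiring k] {μ : Fin s → (Fin n →₀ ℕ)}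
  {g h h' : Fin s → MvPowerSeries (Fin n) k} {r r' : (Fin n →₀ ℕ) → (Fin n →₀ ℕ) → Prop}
  {γ γ' : Fin n →₀ ℕ}

def TermsAbove (r : (Fin n →₀ ℕ) → (Fin n →₀ ℕ) → Prop) (μ : Fin s → (Fin n →₀ ℕ))
    (h : Fin s → MvPowerSeries (Fin n) k) (γ : Fin n →₀ ℕ) : Prop :=
  ∀ l, ∀ δ ∈ psupp (h l), r γ (μ l + δ)

theorem TermsAbove.mono (hh : TermsAbove r μ h γ) (hr : ∀ τ, r γ τ → r' γ' τ) :
    TermsAbove r' μ h γ' :=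
  fun l δ hδ => hr _ (hh l δ hδ)

theorem TermsAbove.add (hh : TermsAbove r μ h γ) (hh' : TermsAbove r μ h' γ) :
    TermsAbove r μ (h + h') γ := by
  intro l δ hδ
  by_contra hr
  exact hδ (by simp [not_imp_comm.mp (hh l δ) hr, not_imp_comm.mp (hh' l δ) hr])

noncomputable def active (μ : Fin s → (Fin n →₀ ℕ)) (h : Fin s → MvPowerSeries (Fin n) k)
    (γ : Fin n →₀ ℕ) : Finset (Fin s) :=
  univ.filter fun l => μ l ≤ γ ∧ coeff (γ - μ l) (h l) ≠ 0

theorem active_add_of_termsAbove_lt (hh' : TermsAbove (Lt le) μ h' γ) :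
    active μ (h + h') γ = active μ h γ := by
  ext l
  simp only [active, mem_filter, mem_univ, true_and, Pi.add_apply, map_add]
  refine and_congr_right fun hl => ?_
  have hzero : coeff (γ - μ l) (h' l) = 0 := by
    by_contra hne
    have hlt := hh' l _ hne
    rw [add_tsub_cancel_of_le hl] at hlt
    exact hlt.2 hlt.1
  rw [hzero, add_zero]

variable (hle : IsAdditiveTotalOrder le)
include hle

theorem termsAbove_lt_of_active_eq_empty (hh : TermsAbove le μ h γ) (hA : active μ h γ = ∅) :
    TermsAbove (Lt le) μ h γ := by
  intro l δ hδ
  refine ⟨hh l δ hδ, fun hδγ => ?_⟩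
  have heq : μ l + δ = γ := hle.antisymm _ _ hδγ (hh l δ hδ)
  have hl : l ∈ active μ h γ :=
    mem_filter.mpr ⟨mem_univ _, heq ▸ le_self_add, by rwa [← heq, add_tsub_cancel_left]⟩
  simp [hA] at hl

theorem termsAbove_single_monomial {l : Fin s} (hl : μ l ≤ γ) (c : k) :
    TermsAbove le μ (Pi.single l (monomial (γ - μ l) c)) γ := by
  intro m δ hδ
  by_cases hm : m = l
  · subst hm
    have hδγ : δ = γ - μ m := by
      by_contra hne
      simp [coeff_monomial, hne] at hδ
    rw [hδγ, add_tsub_cancel_of_le hl]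
    exact hle.refl γ
  · simp [hm] at hδ

theorem TermsAbove.monomial_mul (hh : TermsAbove (Lt le) μ h γ) (ε : Fin n →₀ ℕ) (c : k) :
    TermsAbove (Lt le) μ (fun l => monomial ε c * h l) (γ + ε) := by
  intro l δ hδ
  rw [mem_psupp, coeff_monomial_mul] at hδ
  split_ifs at hδ with hεδ
  · have := hle.add_lt_add_right (hh l _ (right_ne_zero_of_mul hδ)) ε
    rwa [add_assoc, tsub_add_cancel_of_le hεδ] at this
  · exact absurd rfl hδ

theorem coeff_sum_mul_of_termsAbove (hμ : ∀ l, IsLM le (g l) (μ l)) (hh : TermsAbove le μ h γ) :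
    coeff γ (∑ l, h l * g l) =
      ∑ l, if μ l ≤ γ then coeff (γ - μ l) (h l) * coeff (μ l) (g l) else 0 := by
  rw [map_sum]
  refine sum_congr rfl fun l _ => ?_
  rw [coeff_mul_eq_sum_lt_add hle (hμ l), sum_eq_zero, zero_add]
  intro p _
  refine ite_eq_right_iff.mpr fun hlt => ?_
  by_contra hne
  exact hlt.2 (hh l p.1 (left_ne_zero_of_mul hne))

end TermsAbove

section StandardRep

variable {k : Type*} [Field k]

/-- By uniqueness of division, the remainder of `f` on division by `g` is zero. -/
def HasStandardRep (g : Fin s → MvPowerSeries (Fin n) k) (μ : Fin s → (Fin n →₀ ℕ))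
    (f : MvPowerSeries (Fin n) k) : Prop :=
  ∃ q : Fin s → MvPowerSeries (Fin n) k,
    f = ∑ l, q l * g l ∧ ∀ l, ∀ β ∈ psupp (q l), InDelta μ l (β + μ l)

theorem sel_mem {I : Ideal (MvPowerSeries (Fin n) k)} {a b : MvPowerSeries (Fin n) k}
    (ha : a ∈ I) (hb : b ∈ I) (γ γ' : Fin n →₀ ℕ) : Sel a b γ γ' ∈ I := by
  rw [Sel, ← smul_mul_assoc, ← smul_mul_assoc]
  exact sub_mem (I.mul_mem_left _ ha) (I.mul_mem_left _ hb)

theorem monomial_mul_eq_add_sel {g₁ g₂ : MvPowerSeries (Fin n) k} {γ₁ γ₂ γ : Fin n →₀ ℕ}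
    (h₁ : γ₁ ≤ γ) (h₂ : γ₂ ≤ γ) (hc : coeff γ₁ g₁ ≠ 0) (a : k) :
    monomial (γ - γ₁) a * g₁ =
      monomial (γ - γ₂) (a * coeff γ₁ g₁ * (coeff γ₂ g₂)⁻¹) * g₂ +
        monomial (γ - γ₁ ⊔ γ₂) (a * coeff γ₁ g₁) * Sel g₁ g₂ γ₁ γ₂ := by
  have hshift : ∀ {ν : Fin n →₀ ℕ} (g : MvPowerSeries (Fin n) k) (b c : k), ν ≤ γ₁ ⊔ γ₂ →
      monomial (γ - γ₁ ⊔ γ₂) c * (b • (monomial (γ₁ ⊔ γ₂ - ν) 1 * g)) =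
        monomial (γ - ν) (c * b) * g := by
    intro ν g b c hν
    rw [mul_smul_comm, ← mul_assoc, monomial_mul_monomial, mul_one,
      tsub_add_tsub_cancel (sup_le h₁ h₂) hν, ← smul_mul_assoc, ← map_smul, smul_eq_mul, mul_comm b]
  rw [Sel, mul_sub, hshift _ _ _ le_sup_left, hshift _ _ _ le_sup_right,
    mul_inv_cancel_right₀ hc]
  abel

variable (hle : IsAdditiveTotalOrder le)
include hle

theorem lt_of_mem_psupp_sel {a b : MvPowerSeries (Fin n) k} {γ γ' : Fin n →₀ ℕ}
    (ha : IsLM le a γ) (hb : IsLM le b γ') : ∀ π ∈ psupp (Sel a b γ γ'), Lt le (γ ⊔ γ') π := by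
  have hterm : ∀ {c : MvPowerSeries (Fin n) k} {ν : Fin n →₀ ℕ}, IsLM le c ν → ν ≤ γ ⊔ γ' →
      ∀ π, le π (γ ⊔ γ') →
        coeff π ((coeff ν c)⁻¹ • (monomial (γ ⊔ γ' - ν) 1 * c)) = if π = γ ⊔ γ' then 1 else 0 := by
    intro c ν hc hν π hπ
    have hLM := hc.monomial_mul hle (γ ⊔ γ' - ν)
    rw [tsub_add_cancel_of_le hν] at hLM
    rw [coeff_smul]
    split_ifs with hπσ
    · rw [hπσ, coeff_monomial_mul, if_pos tsub_le_self, tsub_tsub_cancel_of_le hν, one_mul,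
        inv_mul_cancel₀ hc.1]
    · rw [hLM.coeff_eq_zero_of_lt ⟨hπ, fun h => hπσ (hle.antisymm _ _ hπ h)⟩, mul_zero]
  intro π hπ
  refine hle.lt_iff_not_le.mpr fun hπσ => hπ ?_
  rw [Sel, map_sub, hterm ha le_sup_left π hπσ, hterm hb le_sup_right π hπσ, sub_self]

variable {g : Fin s → MvPowerSeries (Fin n) k} {μ : Fin s → (Fin n →₀ ℕ)}
  (hμ : ∀ l, IsLM le (g l) (μ l))
include hμ

theorem hasStandardRep_of_mem {I : Ideal (MvPowerSeries (Fin n) k)} (hgI : ∀ l, g l ∈ I)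
    (hG : LMset le I = ⋃ i, {β | ∃ γ, β = μ i + γ}) {f : MvPowerSeries (Fin n) k}
    (hf : f ∈ I) : HasStandardRep g μ f := by
  obtain ⟨q, r, hfqr, hq, hr⟩ := exists_division hle f hμ
  have hrI : r ∈ I := by
    rw [eq_sub_of_add_eq' hfqr.symm]
    exact sub_mem hf (sum_mem fun l _ => I.mul_mem_left _ (hgI l))
  have hr0 : r = 0 := by
    by_contra hr0
    obtain ⟨ν, hν⟩ := exists_isLM hle hr0
    have hνI : ν ∈ LMset le I := ⟨r, hrI, hν⟩
    rw [hG, Set.mem_iUnion] at hνI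
    obtain ⟨l, hl⟩ := hνI
    exact hr ν hν.1 l hl
  exact ⟨q, by rw [hfqr, hr0, add_zero], hq⟩

/-- In a standard representation the least term cannot cancel. -/
theorem termsAbove_lt_of_standardRep {q : Fin s → MvPowerSeries (Fin n) k}
    (hq : ∀ l, ∀ δ ∈ psupp (q l), InDelta μ l (δ + μ l)) {σ : Fin n →₀ ℕ}
    (hσ : ∀ π ∈ psupp (∑ l, q l * g l), Lt le σ π) : TermsAbove (Lt le) μ q σ := by
  intro m δ hδ
  obtain ⟨_, ⟨m₀, δ₀, hδ₀, rfl⟩, hleast⟩ :=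
    hle.exists_least (S := {π | ∃ l, ∃ δ' ∈ psupp (q l), π = μ l + δ'}) ⟨_, m, δ, hδ, rfl⟩
  have habove : TermsAbove le μ q (μ m₀ + δ₀) := fun l δ' hδ' => hleast _ ⟨l, δ', hδ', rfl⟩
  have hcoeff : coeff (μ m₀ + δ₀) (∑ l, q l * g l) = coeff δ₀ (q m₀) * coeff (μ m₀) (g m₀) := by
    rw [coeff_sum_mul_of_termsAbove hle hμ habove, sum_eq_single m₀]
    · rw [if_pos le_self_add, add_tsub_cancel_left]
    · intro l _ hl
      refine ite_eq_right_iff.mpr fun hlπ => ?_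
      by_contra hne
      have hΔ := hq l _ (left_ne_zero_of_mul hne)
      rw [tsub_add_cancel_of_le hlπ] at hΔ
      have hΔ₀ := hq m₀ δ₀ hδ₀
      rw [add_comm] at hΔ₀
      exact hl (hΔ.unique_s17 hΔ₀)
    · simp
  have hmem : μ m₀ + δ₀ ∈ psupp (∑ l, q l * g l) := by
    rw [mem_psupp, hcoeff]
    exact mul_ne_zero hδ₀ (hμ m₀).1
  exact hle.lt_of_lt_of_le (hσ _ hmem) (hleast _ ⟨m, δ, hδ, rfl⟩)

end StandardRep

section Reduction

variable {k : Type*} [Field k] (hle : IsAdditiveTotalOrder le)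
  {g : Fin s → MvPowerSeries (Fin n) k} {μ : Fin s → (Fin n →₀ ℕ)} (hμ : ∀ l, IsLM le (g l) (μ l))
include hle hμ

theorem active_ne_singleton {h : Fin s → MvPowerSeries (Fin n) k} {γ : Fin n →₀ ℕ}
    (hh : TermsAbove le μ h γ) (hγ : coeff γ (∑ l, h l * g l) = 0) (l₀ : Fin s) :
    active μ h γ ≠ {l₀} := by
  intro hA
  have hl₀ : l₀ ∈ active μ h γ := hA ▸ mem_singleton_self l₀
  rw [active, mem_filter] at hl₀
  rw [coeff_sum_mul_of_termsAbove hle hμ hh, sum_eq_single l₀, if_pos hl₀.2.1] at hγ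
  · exact mul_ne_zero hl₀.2.2 (hμ l₀).1 hγ
  · intro l _ hl
    refine ite_eq_right_iff.mpr fun hlγ => ?_
    by_contra hne
    have hlA : l ∈ active μ h γ := mem_filter.mpr ⟨mem_univ _, hlγ, left_ne_zero_of_mul hne⟩
    exact hl (by simpa [hA] using hlA)
  · simp

/-- The contribution of `h l₁` at `γ` is moved onto `g l₂` by `monomial_mul_eq_add_sel`; the
multiple of the S-element that this costs has all its terms strictly above `γ` by
`termsAbove_lt_of_standardRep`. -/
theorem exists_active_subset_erase (hSel : ∀ i j, HasStandardRep g μ (Sel (g i) (g j) (μ i) (μ j)))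
    {h : Fin s → MvPowerSeries (Fin n) k} {γ : Fin n →₀ ℕ} (hh : TermsAbove le μ h γ)
    {l₁ l₂ : Fin s} (h₁ : l₁ ∈ active μ h γ) (h₂ : l₂ ∈ active μ h γ) (hne : l₁ ≠ l₂) :
    ∃ h' : Fin s → MvPowerSeries (Fin n) k, ∑ l, h' l * g l = ∑ l, h l * g l ∧
      TermsAbove le μ h' γ ∧ active μ h' γ ⊆ (active μ h γ).erase l₁ := by
  obtain ⟨q, hqS, hq⟩ := hSel l₁ l₂
  have hγ₁ : μ l₁ ≤ γ := (mem_filter.mp h₁).2.1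
  have hγ₂ : μ l₂ ≤ γ := (mem_filter.mp h₂).2.1
  set a := coeff (γ - μ l₁) (h l₁)
  set b := a * coeff (μ l₁) (g l₁) * (coeff (μ l₂) (g l₂))⁻¹
  set corr : Fin s → MvPowerSeries (Fin n) k :=
    fun m => monomial (γ - μ l₁ ⊔ μ l₂) (a * coeff (μ l₁) (g l₁)) * q m
  have hcorr : TermsAbove (Lt le) μ corr γ := by
    have hqσ := termsAbove_lt_of_standardRep hle hμ hq
      (hqS ▸ lt_of_mem_psupp_sel hle (hμ l₁) (hμ l₂))
    simpa [corr, add_tsub_cancel_of_le (sup_le hγ₁ hγ₂)] using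
      hqσ.monomial_mul hle (γ - μ l₁ ⊔ μ l₂) (a * coeff (μ l₁) (g l₁))
  refine ⟨h + Pi.single l₂ (monomial (γ - μ l₂) b) + Pi.single l₁ (monomial (γ - μ l₁) (-a)) + corr,
    ?_, ?_, ?_⟩
  · have hsum : ∑ l, corr l * g l = monomial (γ - μ l₁ ⊔ μ l₂) (a * coeff (μ l₁) (g l₁)) *
        Sel (g l₁) (g l₂) (μ l₁) (μ l₂) := by
      simp only [corr, hqS, mul_sum, mul_assoc]
    simp only [Pi.add_apply, add_mul, sum_add_distrib, Pi.single_apply, ite_mul, zero_mul,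
      sum_ite_eq', mem_univ, if_true, hsum, map_neg, neg_mul]
    rw [monomial_mul_eq_add_sel hγ₁ hγ₂ (hμ l₁).1 a]
    abel
  · exact ((hh.add (termsAbove_single_monomial hle hγ₂ b)).add
      (termsAbove_single_monomial hle hγ₁ (-a))).add (hcorr.mono fun _ hτ => hτ.1)
  · rw [active_add_of_termsAbove_lt hcorr]
    intro m hm
    obtain ⟨-, hmγ, hm0⟩ := mem_filter.mp hm
    rw [mem_erase]
    by_cases hm₁ : m = l₁
    · subst hm₁
      exact absurd (by simp [hne, a]) hm0
    by_cases hm₂ : m = l₂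
    · exact ⟨hm₁, hm₂ ▸ h₂⟩
    exact ⟨hm₁, mem_filter.mpr ⟨mem_univ _, hmγ, by simpa [Pi.single_apply, hm₁, hm₂] using hm0⟩⟩

theorem exists_termsAbove_lt (hSel : ∀ i j, HasStandardRep g μ (Sel (g i) (g j) (μ i) (μ j)))
    {f : MvPowerSeries (Fin n) k} {ν γ : Fin n →₀ ℕ} (hf : IsLM le f ν) (hγ : Lt le γ ν)
    (h : Fin s → MvPowerSeries (Fin n) k) (hrep : ∑ l, h l * g l = f)
    (hh : TermsAbove le μ h γ) :
    ∃ h' : Fin s → MvPowerSeries (Fin n) k, ∑ l, h' l * g l = f ∧ TermsAbove (Lt le) μ h' γ := by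
  induction h using (measure fun h : Fin s → MvPowerSeries (Fin n) k =>
    (active μ h γ).card).wf.induction with
  | _ h ih =>
  obtain hA | hA := (active μ h γ).eq_empty_or_nonempty
  · exact ⟨h, hrep, termsAbove_lt_of_active_eq_empty hle hh hA⟩
  obtain ⟨l₀, hl₀⟩ | ⟨l₁, h₁, l₂, h₂, hne⟩ := hA.exists_eq_singleton_or_nontrivial
  · exact absurd hl₀ (active_ne_singleton hle hμ hh (hrep ▸ hf.coeff_eq_zero_of_lt hγ) l₀)
  obtain ⟨h', hrep', hh', hsub⟩ := exists_active_subset_erase hle hμ hSel hh h₁ h₂ hne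
  exact ih h' (card_lt_card (hsub.trans_ssubset (erase_ssubset h₁)))
    (hrep'.trans hrep) hh'

end Reduction

section Compactness

open scoped MvPowerSeries.WithPiTopology

variable {k : Type*} [TopologicalSpace k] [T2Space k]

theorem isClosed_setOf_termsAbove [Semiring k] (r : (Fin n →₀ ℕ) → (Fin n →₀ ℕ) → Prop)
    (μ : Fin s → (Fin n →₀ ℕ)) (γ : Fin n →₀ ℕ) :
    IsClosed {h : Fin s → MvPowerSeries (Fin n) k | TermsAbove r μ h γ} := by
  simp only [TermsAbove, mem_psupp, Set.ofPred_forall]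
  refine isClosed_iInter fun l => isClosed_iInter fun δ => ?_
  by_cases hr : r γ (μ l + δ)
  · simp [hr]
  · simpa [hr] using
      isClosed_eq ((WithPiTopology.continuous_coeff k δ).comp (continuous_apply l))
        continuous_const

theorem isClosed_setOf_sum_mul_eq [Semiring k] [IsTopologicalSemiring k]
    (g : Fin s → MvPowerSeries (Fin n) k) (f : MvPowerSeries (Fin n) k) :
    IsClosed {h : Fin s → MvPowerSeries (Fin n) k | ∑ l, h l * g l = f} :=
  isClosed_eq (continuous_finsetSum _ fun l _ => (continuous_apply l).mul continuous_const)
    continuous_const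

variable [Semiring k] [IsTopologicalSemiring k] [CompactSpace k] (hle : IsAdditiveTotalOrder le)
  {g : Fin s → MvPowerSeries (Fin n) k} {μ : Fin s → (Fin n →₀ ℕ)} {f : MvPowerSeries (Fin n) k}
include hle

/-- Cantor's intersection theorem for the closed sets of representations of `f` whose terms lie
strictly above some `γ' ≺ γ`; they are nested since `⪯` is total. -/
theorem exists_termsAbove_of_forall_lt {γ : Fin n →₀ ℕ}
    (hf : ∃ h : Fin s → MvPowerSeries (Fin n) k, ∑ l, h l * g l = f)
    (hlt : ∀ γ', Lt le γ' γ → ∃ h : Fin s → MvPowerSeries (Fin n) k,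
      ∑ l, h l * g l = f ∧ TermsAbove (Lt le) μ h γ') :
    ∃ h : Fin s → MvPowerSeries (Fin n) k, ∑ l, h l * g l = f ∧ TermsAbove le μ h γ := by
  have : CompactSpace (MvPowerSeries (Fin n) k) :=
    inferInstanceAs (CompactSpace ((Fin n →₀ ℕ) → k))
  by_cases hbot : ∀ γ', ¬ Lt le γ' γ
  · obtain ⟨h, hh⟩ := hf
    exact ⟨h, hh, fun l δ _ => hle.le_of_not_lt (hbot _)⟩
  push Not at hbot
  obtain ⟨γ₀, hγ₀⟩ := hbot
  have : Nonempty {γ' // Lt le γ' γ} := ⟨⟨γ₀, hγ₀⟩⟩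
  let t : {γ' // Lt le γ' γ} → Set (Fin s → MvPowerSeries (Fin n) k) := fun γ' =>
    {h | ∑ l, h l * g l = f} ∩ {h | TermsAbove (Lt le) μ h γ'}
  have htcl : ∀ γ', IsClosed (t γ') := fun γ' =>
    (isClosed_setOf_sum_mul_eq g f).inter (isClosed_setOf_termsAbove _ μ γ')
  have htd : Directed (· ⊇ ·) t := by
    intro γ₁ γ₂
    rcases hle.total γ₁ γ₂ with h₁₂ | h₂₁
    · exact ⟨γ₂, fun h hh => ⟨hh.1, hh.2.mono fun _ => hle.lt_of_le_of_lt h₁₂⟩, le_rfl⟩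
    · exact ⟨γ₁, le_rfl, fun h hh => ⟨hh.1, hh.2.mono fun _ => hle.lt_of_le_of_lt h₂₁⟩⟩
  obtain ⟨h, hh⟩ := IsCompact.nonempty_iInter_of_directed_nonempty_isCompact_isClosed t htd
    (fun γ' => hlt γ'.1 γ'.2) (fun γ' => (htcl γ').isCompact) htcl
  rw [Set.mem_iInter] at hh
  refine ⟨h, (hh ⟨γ₀, hγ₀⟩).1, fun l δ hδ => hle.le_of_not_lt fun hδγ => ?_⟩
  have hself := (hh ⟨_, hδγ⟩).2 l δ hδ
  exact hself.2 hself.1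

end Compactness

section

variable {k : Type*} [Field k] [Finite k] (hle : IsAdditiveTotalOrder le)
  {g : Fin s → MvPowerSeries (Fin n) k} {μ : Fin s → (Fin n →₀ ℕ)}
  (hμ : ∀ l, IsLM le (g l) (μ l)) (hSel : ∀ i j, HasStandardRep g μ (Sel (g i) (g j) (μ i) (μ j)))
  {f : MvPowerSeries (Fin n) k} {ν : Fin n →₀ ℕ}
include hle hμ hSel

theorem exists_termsAbove_of_mem_span (hf : f ∈ Ideal.span (Set.range g)) (hLM : IsLM le f ν) :
    ∃ h : Fin s → MvPowerSeries (Fin n) k, ∑ l, h l * g l = f ∧ TermsAbove le μ h ν := by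
  let _ : TopologicalSpace k := ⊥
  have : DiscreteTopology k := ⟨rfl⟩
  suffices ∀ γ, le γ ν → ∃ h : Fin s → MvPowerSeries (Fin n) k,
      ∑ l, h l * g l = f ∧ TermsAbove le μ h γ from this ν (hle.refl ν)
  intro γ
  induction γ using hle.wellFounded.induction with
  | _ γ ih =>
  intro hγν
  refine exists_termsAbove_of_forall_lt hle (Ideal.mem_span_range_iff_exists_fun.mp hf)
    fun γ' hγ' => ?_
  have hγ'ν := hle.lt_of_lt_of_le hγ' hγν
  obtain ⟨h, hrep, hh⟩ := ih γ' hγ' hγ'ν.1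
  exact exists_termsAbove_lt hle hμ hSel hLM hγ'ν h hrep hh

theorem exists_le_of_isLM (hf : f ∈ Ideal.span (Set.range g)) (hLM : IsLM le f ν) :
    ∃ l, μ l ≤ ν := by
  obtain ⟨h, hrep, hh⟩ := exists_termsAbove_of_mem_span hle hμ hSel hf hLM
  by_contra! hnone
  apply hLM.1
  rw [← hrep, coeff_sum_mul_of_termsAbove hle hμ hh]
  exact sum_eq_zero fun l _ => if_neg (hnone l)

end

end Groebner

open Groebner in
theorem statement17_general
    {n s : ℕ} {k : Type*} [Field k] [Finite k]
    (le : (Fin n →₀ ℕ) → (Fin n →₀ ℕ) → Prop) (hle : IsAdditiveTotalOrder le)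
    (I : Ideal (MvPowerSeries (Fin n) k))
    (g : Fin s → MvPowerSeries (Fin n) k)
    (hgI : ∀ i, g i ∈ I)
    (hgen : Ideal.span (Set.range g) = I)
    (μ : Fin s → (Fin n →₀ ℕ)) (hμ : ∀ i, IsLM le (g i) (μ i)) :
    LMset le I = (⋃ i : Fin s, {β | ∃ γ, β = μ i + γ}) ↔
      ∀ i j : Fin s,
        ∃ q : Fin s → MvPowerSeries (Fin n) k,
          Sel (g i) (g j) (μ i) (μ j) = ∑ l, q l * g l ∧
          ∀ l, ∀ β ∈ psupp (q l), InDelta μ l (β + μ l) := by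
  refine ⟨fun hG i j => hasStandardRep_of_mem hle hμ hgI hG (sel_mem (hgI i) (hgI j) _ _),
    fun hSel => Set.ext fun ν => ⟨?_, ?_⟩⟩
  · rintro ⟨f, hf, hLM⟩
    obtain ⟨l, hl⟩ := exists_le_of_isLM hle hμ hSel (hgen ▸ hf) hLM
    exact Set.mem_iUnion.mpr ⟨l, le_iff_exists_add.mp hl⟩
  · rintro ⟨_, ⟨i, rfl⟩, γ, rfl⟩
    exact ⟨monomial γ 1 * g i, I.mul_mem_left _ (hgI i),
      add_comm γ (μ i) ▸ (hμ i).monomial_mul hle γ⟩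

/-- Buchberger's criterion, commutative power series case.
Let `k` be a finite field, `R = k[[x_1, …, x_n]]`, `⪯` an additive total order on `ℕⁿ`.
Suppose `I` is a nonzero ideal of `R` and `G = (g_1, …, g_s)` is a tuple of nonzero elements
of `I` generating `I` as an ideal, with `μ i = LM(g_i)`.  Then `G` is a Gröbner basis for `I`
(i.e. `LM(I) = ⋃ᵢ (LM(g_i) + ℕⁿ)`) if and only if for all `i, j` the remainder of the
S-element `S(g_i, g_j)` on division by `G` is zero, i.e. `S(g_i, g_j)` can be written as
`Σ_l q_l g_l` with `supp(q_l) + LM(g_l) ⊆ Δ_{G,l}` for all `l`. -/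
theorem statement17
    {n s : ℕ} {k : Type*} [Field k] [Finite k]
    (le : (Fin n →₀ ℕ) → (Fin n →₀ ℕ) → Prop) (hle : IsAdditiveTotalOrder le)
    (I : Ideal (MvPowerSeries (Fin n) k)) (hI : I ≠ ⊥)
    (g : Fin s → MvPowerSeries (Fin n) k)
    (hg0 : ∀ i, g i ≠ 0) (hgI : ∀ i, g i ∈ I)
    (hgen : Ideal.span (Set.range g) = I)
    (μ : Fin s → (Fin n →₀ ℕ)) (hμ : ∀ i, IsLM le (g i) (μ i)) :
    LMset le I = (⋃ i : Fin s, {β | ∃ γ, β = μ i + γ}) ↔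
      ∀ i j : Fin s,
        ∃ q : Fin s → MvPowerSeries (Fin n) k,
          Sel (g i) (g j) (μ i) (μ j) = ∑ l, q l * g l ∧
          ∀ l, ∀ β ∈ psupp (q l), InDelta μ l (β + μ l) :=
  statement17_general le hle I g hgI hgen μ hμ
end
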